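/- arXiv:2303.17274 — 4 statements merged into one kernel-verified Lean document; each statement's English description precedes it below -/
import Mathlib

section
/- Every two-terminal directed series-parallel graph G (with source s and sink t) satisfies Property P2: the family {E(P_G(e))}_{e ∈ E(G)} of edge sets of edge-attributed subgraphs forms a laminar set family. -/
open scoped Classical

variable {V : Type*}

/-- `IsWalk E u v p`: `p` is a list of edges of `E` forming a directed walk from `u` to `v`. -/
def IsWalk (E : Finset (V × V)) : V → V → List (V × V) → Prop
  | u, v, [] => u = v
  | u, v, e :: p => e ∈ E ∧ e.1 = u ∧ IsWalk E e.2 v p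

/-- A simple directed path from `u` to `v` (no repeated vertices). -/
def IsPath (E : Finset (V × V)) (u v : V) (p : List (V × V)) : Prop :=
  IsWalk E u v p ∧ (u :: p.map Prod.snd).Nodup

/-- With unit edge capacities, the value of a maximum `u`-`v` flow equals the maximum
number of pairwise edge-disjoint `u`-`v` walks. -/
noncomputable def maxFlow (E : Finset (V × V)) (u v : V) : ℕ :=
  sSup {n : ℕ | ∃ ps : List (List (V × V)), ps.length = n ∧
    (∀ p ∈ ps, IsWalk E u v p) ∧ ps.Pairwise fun p q => ∀ e ∈ p, e ∉ q}

/-- `P_G(u,v)`: the subgraph induced by the edges lying on directed `u`-`v` paths. -/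
noncomputable def pathInduced (E : Finset (V × V)) (u v : V) : Finset (V × V) :=
  E.filter fun e => ∃ p, IsPath E u v p ∧ e ∈ p

/-- The set of vertices incident to an edge of `E`. -/
def verts (E : Finset (V × V)) : Set V := {x | ∃ e ∈ E, e.1 = x ∨ e.2 = x}

/-- Two-terminal directed series-parallel graphs, defined recursively by single edges,
series compositions and parallel compositions (compositions identify terminals, and the
two constituents are otherwise disjoint). -/
inductive IsDSP [DecidableEq V] : Finset (V × V) → V → V → Prop
  | single {s t : V} : s ≠ t → IsDSP {(s, t)} s t
  | series {E₁ E₂ : Finset (V × V)} {s m t : V} :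
      IsDSP E₁ s m → IsDSP E₂ m t → Disjoint E₁ E₂ →
      verts E₁ ∩ verts E₂ ⊆ {m} → IsDSP (E₁ ∪ E₂) s t
  | parallel {E₁ E₂ : Finset (V × V)} {s t : V} :
      IsDSP E₁ s t → IsDSP E₂ s t → Disjoint E₁ E₂ →
      verts E₁ ∩ verts E₂ ⊆ {s, t} → IsDSP (E₁ ∪ E₂) s t

-- basic walk lemmas
lemma isWalk_nil {E : Finset (V × V)} {u v : V} : IsWalk E u v [] ↔ u = v := Iff.rfl

lemma isWalk_cons {E : Finset (V × V)} {u v : V} {e : V × V} {p : List (V × V)} :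
    IsWalk E u v (e :: p) ↔ e ∈ E ∧ e.1 = u ∧ IsWalk E e.2 v p := Iff.rfl

lemma isWalk_mono {E E' : Finset (V × V)} (h : E ⊆ E') {v : V} :
    ∀ {p : List (V × V)} {u : V}, IsWalk E u v p → IsWalk E' u v p := by
  intro p
  induction p with
  | nil => intro u hw; exact hw
  | cons e q ih => intro u hw; exact ⟨h hw.1, hw.2.1, ih hw.2.2⟩

lemma isWalk_restrict {E E' : Finset (V × V)} {v : V} :
    ∀ {p : List (V × V)} {u : V}, IsWalk E u v p → (∀ f ∈ p, f ∈ E') → IsWalk E' u v p := by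
  intro p
  induction p with
  | nil => intro u hw _; exact hw
  | cons e q ih =>
    intro u hw hall
    exact ⟨hall e List.mem_cons_self, hw.2.1, ih hw.2.2 fun f hf => hall f (List.mem_cons_of_mem _ hf)⟩

lemma isWalk_append {E : Finset (V × V)} {v w : V} :
    ∀ {p : List (V × V)} {u : V}, IsWalk E u v p →
      ∀ {q : List (V × V)}, IsWalk E v w q → IsWalk E u w (p ++ q) := by
  intro p
  induction p with
  | nil => intro u hw q hq; cases hw; exact hq
  | cons e r ih => intro u hw q hq; exact ⟨hw.1, hw.2.1, ih hw.2.2 hq⟩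

lemma isWalk_edges {E : Finset (V × V)} {v : V} :
    ∀ {p : List (V × V)} {u : V}, IsWalk E u v p → ∀ f ∈ p, f ∈ E := by
  intro p
  induction p with
  | nil => intro u _ f hf; cases hf
  | cons e q ih =>
    intro u hw f hf
    rcases List.mem_cons.1 hf with h | h
    · exact h ▸ hw.1
    · exact ih hw.2.2 f h

lemma isWalk_snd_verts {E : Finset (V × V)} {v : V} {p : List (V × V)} {u : V}
    (hw : IsWalk E u v p) : ∀ x ∈ p.map Prod.snd, x ∈ verts E := by
  intro x hx
  rcases List.mem_map.1 hx with ⟨f, hf, rfl⟩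
  exact ⟨f, isWalk_edges hw f hf, Or.inr rfl⟩

lemma isWalk_start_verts {E : Finset (V × V)} {v u : V} {e : V × V} {p : List (V × V)}
    (hw : IsWalk E u v (e :: p)) : u ∈ verts E :=
  ⟨e, hw.1, Or.inl hw.2.1⟩

-- basic DSP facts
lemma dsp_facts [DecidableEq V] {E : Finset (V × V)} {s t : V} (h : IsDSP E s t) :
    s ≠ t ∧ E.Nonempty ∧ s ∈ verts E ∧ t ∈ verts E ∧
      (∀ e ∈ E, e.2 ≠ s) ∧ (∀ e ∈ E, e.1 ≠ t) := by
  induction h with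
  | @single s t hst =>
    refine ⟨hst, ⟨(s, t), Finset.mem_singleton_self _⟩,
      ⟨(s, t), Finset.mem_singleton_self _, Or.inl rfl⟩,
      ⟨(s, t), Finset.mem_singleton_self _, Or.inr rfl⟩, ?_, ?_⟩
    · intro e he
      rw [Finset.mem_singleton] at he; subst he
      exact fun hh => hst hh.symm
    · intro e he
      rw [Finset.mem_singleton] at he; subst he
      exact hst
  | @series E₁ E₂ s m t h₁ h₂ hd hv ih₁ ih₂ =>
    obtain ⟨hsm, hne₁, hs₁, hm₁, hin₁, hout₁⟩ := ih₁
    obtain ⟨hmt, hne₂, hm₂, ht₂, hin₂, hout₂⟩ := ih₂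
    have hvu : verts (E₁ ∪ E₂) = verts E₁ ∪ verts E₂ := by
      ext x
      constructor
      · rintro ⟨e, he, hx⟩
        rcases Finset.mem_union.1 he with h | h
        · exact Or.inl ⟨e, h, hx⟩
        · exact Or.inr ⟨e, h, hx⟩
      · rintro (⟨e, he, hx⟩ | ⟨e, he, hx⟩)
        · exact ⟨e, Finset.mem_union_left _ he, hx⟩
        · exact ⟨e, Finset.mem_union_right _ he, hx⟩
    refine ⟨?_, hne₁.mono Finset.subset_union_left, hvu ▸ Or.inl hs₁, hvu ▸ Or.inr ht₂, ?_, ?_⟩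
    · intro hst; subst hst
      have : s ∈ verts E₁ ∩ verts E₂ := ⟨hs₁, ht₂⟩
      exact hsm (hv this)
    · intro e he hes
      rcases Finset.mem_union.1 he with h | h
      · exact hin₁ e h hes
      · have : s ∈ verts E₁ ∩ verts E₂ := ⟨hs₁, ⟨e, h, Or.inr hes⟩⟩
        have hsm' : s = m := hv this
        exact hin₂ e h (hes.trans hsm')
    · intro e he het
      rcases Finset.mem_union.1 he with h | h
      · have : t ∈ verts E₁ ∩ verts E₂ := ⟨⟨e, h, Or.inl het⟩, ht₂⟩
        have : t = m := hv this
        exact hout₁ e h (het.trans this)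
      · exact hout₂ e h het
  | @parallel E₁ E₂ s t h₁ h₂ hd hv ih₁ ih₂ =>
    obtain ⟨hst, hne₁, hs₁, ht₁, hin₁, hout₁⟩ := ih₁
    obtain ⟨_, _, _, _, hin₂, hout₂⟩ := ih₂
    refine ⟨hst, hne₁.mono Finset.subset_union_left,
      (fun ⟨e, he, hx⟩ => ⟨e, Finset.mem_union_left _ he, hx⟩ : s ∈ verts E₁ → s ∈ verts (E₁ ∪ E₂)) hs₁,
      (fun ⟨e, he, hx⟩ => ⟨e, Finset.mem_union_left _ he, hx⟩ : t ∈ verts E₁ → t ∈ verts (E₁ ∪ E₂)) ht₁, ?_, ?_⟩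
    · intro e he hes
      rcases Finset.mem_union.1 he with h | h
      · exact hin₁ e h hes
      · exact hin₂ e h hes
    · intro e he het
      rcases Finset.mem_union.1 he with h | h
      · exact hout₁ e h het
      · exact hout₂ e h het

-- forward key lemma: if no E₂ edge can start where an E₁ edge ends, and no E₂ edge starts
-- at the source of the walk, then the whole walk lies in E₁.
lemma keyF [DecidableEq V] {E₁ E₂ : Finset (V × V)} {v : V}
    (h2 : ∀ g ∈ E₂, ∀ f ∈ E₁, g.1 ≠ f.2) :
    ∀ {p : List (V × V)} {u : V}, IsWalk (E₁ ∪ E₂) u v p →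
      (∀ g ∈ E₂, g.1 ≠ u) → ∀ f ∈ p, f ∈ E₁ := by
  intro p
  induction p with
  | nil => intro u _ _ f hf; cases hf
  | cons e q ih =>
    intro u hw hu f hf
    have he1 : e ∈ E₁ := by
      rcases Finset.mem_union.1 hw.1 with h | h
      · exact h
      · exact absurd hw.2.1 (hu e h)
    rcases List.mem_cons.1 hf with h | h
    · exact h ▸ he1
    · exact ih hw.2.2 (fun g hg => h2 g hg e he1) f h

-- backward key lemma
lemma keyB [DecidableEq V] {E₁ E₂ : Finset (V × V)} {v : V}
    (h2 : ∀ g ∈ E₂, ∀ f ∈ E₁, g.2 ≠ f.1) (hv : ∀ g ∈ E₂, g.2 ≠ v) :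
    ∀ {p : List (V × V)} {u : V}, IsWalk (E₁ ∪ E₂) u v p → ∀ f ∈ p, f ∈ E₁ := by
  intro p
  induction p with
  | nil => intro u _ f hf; cases hf
  | cons e q ih =>
    intro u hw f hf
    have hq : ∀ f ∈ q, f ∈ E₁ := ih hw.2.2
    have he1 : e ∈ E₁ := by
      rcases Finset.mem_union.1 hw.1 with h | h
      · exact h
      · exfalso
        match q, hw.2.2 with
        | [], hw2 => exact hv e h ((isWalk_nil.1 hw2))
        | e' :: q', hw2 => exact h2 e h e' (hq e' List.mem_cons_self) hw2.2.1.symm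
    rcases List.mem_cons.1 hf with h | h
    · exact h ▸ he1
    · exact hq f h

lemma pathInduced_reduce [DecidableEq V] {E₁ E₂ : Finset (V × V)} {u v : V}
    (hall : ∀ (p : List (V × V)), IsWalk (E₁ ∪ E₂) u v p → ∀ f ∈ p, f ∈ E₁) :
    pathInduced (E₁ ∪ E₂) u v = pathInduced E₁ u v := by
  ext f
  simp only [pathInduced, Finset.mem_filter]
  constructor
  · rintro ⟨hf, p, ⟨hw, hnd⟩, hfp⟩
    exact ⟨hall p hw f hfp, p, ⟨isWalk_restrict hw (hall p hw), hnd⟩, hfp⟩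
  · rintro ⟨hf, p, ⟨hw, hnd⟩, hfp⟩
    exact ⟨Finset.mem_union_left _ hf, p, ⟨isWalk_mono Finset.subset_union_left hw, hnd⟩, hfp⟩

lemma pathInduced_subset {E : Finset (V × V)} {u v : V} : pathInduced E u v ⊆ E :=
  Finset.filter_subset _ _

-- gluing paths in a series composition
lemma path_append [DecidableEq V] {E₁ E₂ : Finset (V × V)} {s m t : V}
    (h₁ : IsDSP E₁ s m) (h₂ : IsDSP E₂ m t) (hv : verts E₁ ∩ verts E₂ ⊆ {m})
    {p₁ p₂ : List (V × V)} (hp₁ : IsPath E₁ s m p₁) (hp₂ : IsPath E₂ m t p₂) :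
    IsPath (E₁ ∪ E₂) s t (p₁ ++ p₂) := by
  obtain ⟨hw₁, hnd₁⟩ := hp₁
  obtain ⟨hw₂, hnd₂⟩ := hp₂
  refine ⟨isWalk_append (isWalk_mono Finset.subset_union_left hw₁)
    (isWalk_mono Finset.subset_union_right hw₂), ?_⟩
  have hsm : s ≠ m := (dsp_facts h₁).1
  have hp₁ne : p₁ ≠ [] := by
    rintro rfl; exact hsm (isWalk_nil.1 hw₁)
  have hs₁ : s ∈ verts E₁ := by
    match p₁, hw₁, hp₁ne with
    | e :: q, hw, _ => exact isWalk_start_verts hw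
  rw [List.map_append]
  have : (s :: (p₁.map Prod.snd ++ p₂.map Prod.snd)) =
      (s :: p₁.map Prod.snd) ++ p₂.map Prod.snd := rfl
  rw [this, List.nodup_append]
  refine ⟨hnd₁, (List.nodup_cons.1 hnd₂).2, ?_⟩
  intro x hx y hx2 hxy; subst hxy
  have hxv2 : x ∈ verts E₂ := isWalk_snd_verts hw₂ x hx2
  have hxv1 : x ∈ verts E₁ := by
    rcases List.mem_cons.1 hx with h | h
    · exact h ▸ hs₁
    · exact isWalk_snd_verts hw₁ x h
  have hxm : x = m := hv ⟨hxv1, hxv2⟩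
  exact (List.nodup_cons.1 hnd₂).1 (hxm ▸ hx2)

-- every edge lies on a simple s-t path
lemma dsp_edge_on_path [DecidableEq V] {E : Finset (V × V)} {s t : V} (h : IsDSP E s t) :
    ∀ e ∈ E, ∃ p, IsPath E s t p ∧ e ∈ p := by
  induction h with
  | @single s t hst =>
    intro e he
    rw [Finset.mem_singleton] at he; subst he
    refine ⟨[(s, t)], ⟨⟨Finset.mem_singleton_self _, rfl, rfl⟩, ?_⟩, List.mem_singleton_self _⟩
    simp [hst]
  | @series E₁ E₂ s m t h₁ h₂ hd hv ih₁ ih₂ =>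
    intro e he
    rcases Finset.mem_union.1 he with hh | hh
    · obtain ⟨p₁, hp₁, hep⟩ := ih₁ e hh
      obtain ⟨e₂, he₂⟩ := (dsp_facts h₂).2.1
      obtain ⟨p₂, hp₂, _⟩ := ih₂ e₂ he₂
      exact ⟨p₁ ++ p₂, path_append h₁ h₂ hv hp₁ hp₂, List.mem_append_left _ hep⟩
    · obtain ⟨p₂, hp₂, hep⟩ := ih₂ e hh
      obtain ⟨e₁, he₁⟩ := (dsp_facts h₁).2.1
      obtain ⟨p₁, hp₁, _⟩ := ih₁ e₁ he₁
      exact ⟨p₁ ++ p₂, path_append h₁ h₂ hv hp₁ hp₂, List.mem_append_right _ hep⟩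
  | @parallel E₁ E₂ s t h₁ h₂ hd hv ih₁ ih₂ =>
    intro e he
    rcases Finset.mem_union.1 he with hh | hh
    · obtain ⟨p, ⟨hw, hnd⟩, hep⟩ := ih₁ e hh
      exact ⟨p, ⟨isWalk_mono Finset.subset_union_left hw, hnd⟩, hep⟩
    · obtain ⟨p, ⟨hw, hnd⟩, hep⟩ := ih₂ e hh
      exact ⟨p, ⟨isWalk_mono Finset.subset_union_right hw, hnd⟩, hep⟩

lemma pathInduced_full [DecidableEq V] {E : Finset (V × V)} {s t : V} (h : IsDSP E s t) :
    pathInduced E s t = E := by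
  apply Finset.Subset.antisymm pathInduced_subset
  intro e he
  exact Finset.mem_filter.2 ⟨he, dsp_edge_on_path h e he⟩

lemma series_reduce₁ [DecidableEq V] {E₁ E₂ : Finset (V × V)} {s m t : V}
    (h₁ : IsDSP E₁ s m) (h₂ : IsDSP E₂ m t) (hv : verts E₁ ∩ verts E₂ ⊆ {m})
    {e : V × V} (he : e ∈ E₁) :
    pathInduced (E₁ ∪ E₂) e.1 e.2 = pathInduced E₁ e.1 e.2 := by
  have hin₂ : ∀ g ∈ E₂, g.2 ≠ m := (dsp_facts h₂).2.2.2.2.1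
  have h2 : ∀ g ∈ E₂, ∀ f ∈ E₁, g.2 ≠ f.1 := by
    intro g hg f hf hgf
    have : g.2 = m := hv ⟨⟨f, hf, Or.inl hgf.symm⟩, ⟨g, hg, Or.inr rfl⟩⟩
    exact hin₂ g hg this
  have hvc : ∀ g ∈ E₂, g.2 ≠ e.2 := by
    intro g hg hge
    have : g.2 = m := hv ⟨⟨e, he, Or.inr hge.symm⟩, ⟨g, hg, Or.inr rfl⟩⟩
    exact hin₂ g hg this
  exact pathInduced_reduce fun p hw => keyB h2 hvc hw

lemma series_reduce₂ [DecidableEq V] {E₁ E₂ : Finset (V × V)} {s m t : V}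
    (h₁ : IsDSP E₁ s m) (h₂ : IsDSP E₂ m t) (hv : verts E₁ ∩ verts E₂ ⊆ {m})
    {e : V × V} (he : e ∈ E₂) :
    pathInduced (E₁ ∪ E₂) e.1 e.2 = pathInduced E₂ e.1 e.2 := by
  have hout₁ : ∀ g ∈ E₁, g.1 ≠ m := (dsp_facts h₁).2.2.2.2.2
  have h2 : ∀ g ∈ E₁, ∀ f ∈ E₂, g.1 ≠ f.2 := by
    intro g hg f hf hgf
    have : g.1 = m := hv ⟨⟨g, hg, Or.inl rfl⟩, ⟨f, hf, Or.inr hgf.symm⟩⟩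
    exact hout₁ g hg this
  have hu : ∀ g ∈ E₁, g.1 ≠ e.1 := by
    intro g hg hge
    have : g.1 = m := hv ⟨⟨g, hg, Or.inl rfl⟩, ⟨e, he, Or.inl hge.symm⟩⟩
    exact hout₁ g hg this
  rw [Finset.union_comm]
  exact pathInduced_reduce fun p hw => keyF h2 hw hu

lemma parallel_reduce [DecidableEq V] {E₁ E₂ : Finset (V × V)} {s t : V}
    (h₁ : IsDSP E₁ s t) (h₂ : IsDSP E₂ s t) (hv : verts E₁ ∩ verts E₂ ⊆ {s, t})
    {e : V × V} (he : e ∈ E₁) (hne : ¬(e.1 = s ∧ e.2 = t)) :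
    pathInduced (E₁ ∪ E₂) e.1 e.2 = pathInduced E₁ e.1 e.2 := by
  have hin₁ : ∀ g ∈ E₁, g.2 ≠ s := (dsp_facts h₁).2.2.2.2.1
  have hout₁ : ∀ g ∈ E₁, g.1 ≠ t := (dsp_facts h₁).2.2.2.2.2
  have hin₂ : ∀ g ∈ E₂, g.2 ≠ s := (dsp_facts h₂).2.2.2.2.1
  have hout₂ : ∀ g ∈ E₂, g.1 ≠ t := (dsp_facts h₂).2.2.2.2.2
  by_cases hs : e.1 = s
  · -- then e.2 ≠ t; use backward key
    have het : e.2 ≠ t := fun ht => hne ⟨hs, ht⟩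
    have h2 : ∀ g ∈ E₂, ∀ f ∈ E₁, g.2 ≠ f.1 := by
      intro g hg f hf hgf
      have : f.1 ∈ ({s, t} : Set V) := hv ⟨⟨f, hf, Or.inl rfl⟩, ⟨g, hg, Or.inr hgf⟩⟩
      rcases this with h | h
      · exact hin₂ g hg (hgf.trans h)
      · exact hout₁ f hf h
    have hvc : ∀ g ∈ E₂, g.2 ≠ e.2 := by
      intro g hg hge
      have : e.2 ∈ ({s, t} : Set V) := hv ⟨⟨e, he, Or.inr rfl⟩, ⟨g, hg, Or.inr hge⟩⟩
      rcases this with h | h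
      · exact hin₁ e he h
      · exact het h
    exact pathInduced_reduce fun p hw => keyB h2 hvc hw
  · -- e.1 ≠ s; use forward key
    have h2 : ∀ g ∈ E₂, ∀ f ∈ E₁, g.1 ≠ f.2 := by
      intro g hg f hf hgf
      have : g.1 ∈ ({s, t} : Set V) := hv ⟨⟨f, hf, Or.inr hgf.symm⟩, ⟨g, hg, Or.inl rfl⟩⟩
      rcases this with h | h
      · exact hin₁ f hf (hgf.symm.trans h)
      · exact hout₂ g hg h
    have hu : ∀ g ∈ E₂, g.1 ≠ e.1 := by
      intro g hg hge
      have : e.1 ∈ ({s, t} : Set V) := hv ⟨⟨e, he, Or.inl rfl⟩, ⟨g, hg, Or.inl hge⟩⟩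
      rcases this with h | h
      · exact hs h
      · exact hout₁ e he h
    exact pathInduced_reduce fun p hw => keyF h2 hw hu


/-- every two-terminal directed series-parallel graph satisfies Property P2:
the family `{E(P_G(e))}_{e ∈ E}` of edge sets of edge-attributed subgraphs is laminar. -/
theorem dsp_satisfies_P2 [Fintype V] [DecidableEq V]
    (E : Finset (V × V)) (s t : V) (h : IsDSP E s t) :
    ∀ e₁ ∈ E, ∀ e₂ ∈ E,
      pathInduced E e₁.1 e₁.2 ⊆ pathInduced E e₂.1 e₂.2 ∨
      pathInduced E e₂.1 e₂.2 ⊆ pathInduced E e₁.1 e₁.2 ∨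
      Disjoint (pathInduced E e₁.1 e₁.2) (pathInduced E e₂.1 e₂.2) := by
  induction h with
  | single hst =>
    intro e₁ he₁ e₂ he₂
    rw [Finset.mem_singleton] at he₁ he₂
    subst he₁; subst he₂
    exact Or.inl (Finset.Subset.refl _)
  | @series E₁ E₂ s m t h₁ h₂ hd hv ih₁ ih₂ =>
    intro e₁ he₁ e₂ he₂
    rcases Finset.mem_union.1 he₁ with q₁ | q₁ <;> rcases Finset.mem_union.1 he₂ with q₂ | q₂
    · rw [series_reduce₁ h₁ h₂ hv q₁, series_reduce₁ h₁ h₂ hv q₂]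
      exact ih₁ e₁ q₁ e₂ q₂
    · rw [series_reduce₁ h₁ h₂ hv q₁, series_reduce₂ h₁ h₂ hv q₂]
      exact Or.inr (Or.inr (Disjoint.mono pathInduced_subset pathInduced_subset hd))
    · rw [series_reduce₂ h₁ h₂ hv q₁, series_reduce₁ h₁ h₂ hv q₂]
      exact Or.inr (Or.inr (Disjoint.mono pathInduced_subset pathInduced_subset hd.symm))
    · rw [series_reduce₂ h₁ h₂ hv q₁, series_reduce₂ h₁ h₂ hv q₂]
      exact ih₂ e₁ q₁ e₂ q₂
  | @parallel E₁ E₂ s t h₁ h₂ hd hv ih₁ ih₂ =>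
    intro e₁ he₁ e₂ he₂
    have hfull : IsDSP (E₁ ∪ E₂) s t := IsDSP.parallel h₁ h₂ hd hv
    have hv' : verts E₂ ∩ verts E₁ ⊆ {s, t} := by rw [Set.inter_comm]; exact hv
    by_cases hA : e₁.1 = s ∧ e₁.2 = t
    · refine Or.inr (Or.inl ?_)
      rw [hA.1, hA.2, pathInduced_full hfull]
      exact pathInduced_subset
    by_cases hB : e₂.1 = s ∧ e₂.2 = t
    · refine Or.inl ?_
      rw [hB.1, hB.2, pathInduced_full hfull]
      exact pathInduced_subset
    have red : ∀ e ∈ E₁ ∪ E₂, ¬(e.1 = s ∧ e.2 = t) →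
        (e ∈ E₁ ∧ pathInduced (E₁ ∪ E₂) e.1 e.2 = pathInduced E₁ e.1 e.2) ∨
        (e ∈ E₂ ∧ pathInduced (E₁ ∪ E₂) e.1 e.2 = pathInduced E₂ e.1 e.2) := by
      intro e he hne
      rcases Finset.mem_union.1 he with q | q
      · exact Or.inl ⟨q, parallel_reduce h₁ h₂ hv q hne⟩
      · refine Or.inr ⟨q, ?_⟩
        rw [Finset.union_comm]
        exact parallel_reduce h₂ h₁ hv' q hne
    rcases red e₁ he₁ hA with ⟨q₁, r₁⟩ | ⟨q₁, r₁⟩ <;>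
      rcases red e₂ he₂ hB with ⟨q₂, r₂⟩ | ⟨q₂, r₂⟩
    · rw [r₁, r₂]; exact ih₁ e₁ q₁ e₂ q₂
    · rw [r₁, r₂]
      exact Or.inr (Or.inr (Disjoint.mono pathInduced_subset pathInduced_subset hd))
    · rw [r₁, r₂]
      exact Or.inr (Or.inr (Disjoint.mono pathInduced_subset pathInduced_subset hd.symm))
    · rw [r₁, r₂]; exact ih₂ e₁ q₁ e₂ q₂
end

section
/- Let G be a directed graph that contains, for some pair of vertices (s,t), a cycle C within the subgraph P_G(s,t) induced by edges on s-t paths. Then G contains a subgraph homeomorphic to the graph W (four vertices a,b,c,d with edges a→b, a→c, b→c, b→d, c→d). -/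
open scoped Classical

variable {V : Type*}

/-- The list of internal vertices of a walk (all vertices after the start, except the last). -/
def innerVerts (p : List (V × V)) : List V := (p.map Prod.snd).dropLast

/-- `G` contains a subgraph homeomorphic to `W` (the graph on `{a,b,c,d}` with edges
`ab, ac, bc, bd, cd`): five nonempty internally-disjoint directed paths realizing a
subdivision of `W`. -/
def HasWSubdivision (E : Finset (V × V)) : Prop :=
  ∃ a b c d : V, ∃ p₁ p₂ p₃ p₄ p₅ : List (V × V),
    ([a, b, c, d] : List V).Nodup ∧
    p₁ ≠ [] ∧ p₂ ≠ [] ∧ p₃ ≠ [] ∧ p₄ ≠ [] ∧ p₅ ≠ [] ∧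
    IsPath E a b p₁ ∧ IsPath E a c p₂ ∧ IsPath E b c p₃ ∧
    IsPath E b d p₄ ∧ IsPath E c d p₅ ∧
    (∀ p ∈ [p₁, p₂, p₃, p₄, p₅], ∀ x ∈ innerVerts p, x ∉ ([a, b, c, d] : List V)) ∧
    ([p₁, p₂, p₃, p₄, p₅] : List (List (V × V))).Pairwise
      fun p q => ∀ x ∈ innerVerts p, x ∉ innerVerts q


set_option linter.unusedSectionVars false

section Helpers
variable {V : Type*} [DecidableEq V] {E : Finset (V × V)} {s t u v w : V}
  {p q : List (V × V)}

lemma IsWalk.nil_iff : IsWalk E u v ([] : List (V × V)) ↔ u = v := Iff.rfl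

lemma IsWalk.append' (h1 : IsWalk E u v p) (h2 : IsWalk E v w q) :
    IsWalk E u w (p ++ q) := by
  induction p generalizing u with
  | nil => cases h1; simpa using h2
  | cons e p ih =>
    obtain ⟨he, hfst, hw⟩ := h1
    exact ⟨he, hfst, ih hw⟩

lemma IsWalk.mem_E (h : IsWalk E u v p) {e : V × V} (he : e ∈ p) : e ∈ E := by
  induction p generalizing u with
  | nil => cases he
  | cons f p ih =>
    obtain ⟨hf, _, hw⟩ := h
    rcases List.mem_cons.1 he with rfl | he'
    · exact hf
    · exact ih hw he'

lemma IsWalk.getLast_eq (h : IsWalk E u v p) :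
    (u :: p.map Prod.snd).getLast (List.cons_ne_nil _ _) = v := by
  induction p generalizing u with
  | nil => cases h; simp
  | cons e p ih =>
    obtain ⟨_, _, hw⟩ := h
    simpa [List.getLast_cons] using ih hw

lemma IsWalk.wv_eq (h : IsWalk E u v p) :
    u :: p.map Prod.snd = (u :: p.map Prod.snd).dropLast ++ [v] := by
  conv_lhs => rw [← List.dropLast_append_getLast (l := u :: p.map Prod.snd) (by simp)]
  rw [h.getLast_eq]

lemma IsWalk.wv_append (h1 : IsWalk E u v p) (q : List (V × V)) :
    u :: (p ++ q).map Prod.snd = (u :: p.map Prod.snd).dropLast ++ (v :: q.map Prod.snd) := by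
  have := h1.wv_eq
  rw [List.map_append, show u :: (p.map Prod.snd ++ q.map Prod.snd)
      = (u :: p.map Prod.snd) ++ q.map Prod.snd from rfl, this]
  simp

lemma IsWalk.split {x : V} {L₁ L₂ : List V} (h : IsWalk E u w p)
    (hw : u :: p.map Prod.snd = L₁ ++ x :: L₂) :
    ∃ p₁ p₂, p = p₁ ++ p₂ ∧ IsWalk E u x p₁ ∧ IsWalk E x w p₂ ∧
      u :: p₁.map Prod.snd = L₁ ++ [x] ∧ p₂.map Prod.snd = L₂ := by
  induction p generalizing u L₁ with
  | nil =>
    obtain rfl : u = w := h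
    rcases L₁ with _ | ⟨a, L₁⟩
    · simp only [List.nil_append, List.cons.injEq, List.map_nil] at hw
      obtain ⟨rfl, hw2⟩ := hw
      obtain rfl : L₂ = [] := hw2.symm
      exact ⟨[], [], by simp, rfl, rfl, by simp, rfl⟩
    · simp only [List.cons_append, List.cons.injEq, List.map_nil] at hw
      exact absurd hw.2.symm (by simp)
  | cons e p ih =>
    obtain ⟨he, hfst, hwalk⟩ := h
    rcases L₁ with _ | ⟨a, L₁⟩
    · simp at hw
      obtain ⟨rfl, rfl⟩ := hw
      exact ⟨[], e :: p, by simp, rfl, ⟨he, hfst, hwalk⟩, by simp, by simp⟩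
    · simp only [List.cons_append, List.cons.injEq] at hw
      obtain ⟨rfl, hw2⟩ := hw
      obtain ⟨p₁, p₂, rfl, hw1, hw2', hv1, hv2⟩ := ih hwalk hw2
      exact ⟨e :: p₁, p₂, by simp, ⟨he, hfst, hw1⟩, hw2', by simpa using hv1, hv2⟩

lemma IsWalk.split_edge {e : V × V} (h : IsWalk E u v p) (he : e ∈ p) :
    ∃ p₁ p₂, p = p₁ ++ e :: p₂ ∧ IsWalk E u e.1 p₁ ∧ IsWalk E e.2 v p₂ := by
  induction p generalizing u with
  | nil => cases he
  | cons f p ih =>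
    obtain ⟨hf, hfst, hwalk⟩ := h
    rcases List.mem_cons.1 he with rfl | he'
    · exact ⟨[], p, by simp, hfst.symm ▸ rfl, hwalk⟩
    · obtain ⟨p₁, p₂, rfl, h1, h2⟩ := ih hwalk he'
      exact ⟨f :: p₁, p₂, by simp, ⟨hf, hfst, h1⟩, h2⟩

lemma IsWalk.ne_nil (h : IsWalk E u v p) (huv : u ≠ v) : p ≠ [] := by
  rintro rfl; exact huv h

/-- first element of a list satisfying a predicate, with clean prefix -/
lemma exists_first_split {α : Type*} {P : α → Prop} [DecidablePred P] {l : List α}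
    (h : ∃ x ∈ l, P x) :
    ∃ L₁ x L₂, l = L₁ ++ x :: L₂ ∧ P x ∧ ∀ y ∈ L₁, ¬ P y := by
  induction l with
  | nil => simp at h
  | cons a l ih =>
    by_cases ha : P a
    · exact ⟨[], a, l, by simp, ha, by simp⟩
    · obtain ⟨x, hx, hPx⟩ := h
      rcases List.mem_cons.1 hx with rfl | hx'
      · exact absurd hPx ha
      · obtain ⟨L₁, x, L₂, rfl, h1, h2⟩ := ih ⟨x, hx', hPx⟩
        exact ⟨a :: L₁, x, L₂, by simp, h1, by simpa [ha] using h2⟩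

/-- last element of a list satisfying a predicate, with clean suffix -/
lemma exists_last_split {α : Type*} {P : α → Prop} [DecidablePred P] {l : List α}
    (h : ∃ x ∈ l, P x) :
    ∃ L₁ x L₂, l = L₁ ++ x :: L₂ ∧ P x ∧ ∀ y ∈ L₂, ¬ P y := by
  induction l with
  | nil => simp at h
  | cons a l ih =>
    by_cases hl : ∃ x ∈ l, P x
    · obtain ⟨L₁, x, L₂, rfl, h1, h2⟩ := ih hl
      exact ⟨a :: L₁, x, L₂, by simp, h1, h2⟩
    · obtain ⟨x, hx, hPx⟩ := h
      push_neg at hl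
      rcases List.mem_cons.1 hx with rfl | hx'
      · exact ⟨[], x, l, by simp, hPx, hl⟩
      · exact absurd hPx (hl x hx')

lemma nodup_cross {α : Type*} {l l₁ l₂ : List α} {x : α} (h : l.Nodup)
    (he : l = l₁ ++ l₂) (hx : x ∈ l₁) (hy : x ∈ l₂) : False := by
  subst he
  exact (List.disjoint_of_nodup_append h) hx hy

lemma nodup_infix {α : Type*} {l l₁ m l₂ : List α} (h : l.Nodup)
    (he : l = l₁ ++ m ++ l₂) : m.Nodup := by
  subst he
  refine List.Nodup.sublist ?_ h
  rw [List.append_assoc]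
  exact (List.sublist_append_left m l₂).trans (List.sublist_append_right l₁ _)

end Helpers

section Main
variable {V : Type*} [DecidableEq V] (E : Finset (V × V)) (s t : V)

/-- `x` occurs strictly before `y` on some `s`-`t` path of `E`. -/
def Btwn (x y : V) : Prop :=
  ∃ P P₁ P₂ P₃, IsPath E s t P ∧ P = P₁ ++ P₂ ++ P₃ ∧
    IsWalk E s x P₁ ∧ IsWalk E x y P₂ ∧ IsWalk E y t P₃ ∧ P₂ ≠ []

/-- Two `s`-`t` paths ordering a pair of vertices oppositely. -/
def OppPair : Prop :=
  ∃ b c P Q P₁ P₂ P₃ Q₁ Q₂ Q₃,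
    IsPath E s t P ∧ IsPath E s t Q ∧
    P = P₁ ++ P₂ ++ P₃ ∧ Q = Q₁ ++ Q₂ ++ Q₃ ∧
    IsWalk E s b P₁ ∧ IsWalk E b c P₂ ∧ IsWalk E c t P₃ ∧ P₂ ≠ [] ∧
    IsWalk E s c Q₁ ∧ IsWalk E c b Q₂ ∧ IsWalk E b t Q₃ ∧ Q₂ ≠ []

variable {E s t}

lemma btwn_irrefl {x : V} (h : Btwn E s t x x) : False := by
  obtain ⟨P, P₁, P₂, P₃, ⟨hPw, hPnd⟩, rfl, h1, h2, h3, hne⟩ := h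
  rw [List.append_assoc, h1.wv_append (P₂ ++ P₃), h2.wv_append P₃] at hPnd
  have hx2 : x ∈ (s :: P₁.map Prod.snd).dropLast ++ (x :: P₂.map Prod.snd).dropLast := by
    rcases P₂ with _ | ⟨e, P₂⟩
    · exact absurd rfl hne
    · simp
  have hx3 : x ∈ x :: P₃.map Prod.snd := by simp
  exact nodup_cross hPnd (List.append_assoc _ _ _).symm hx2 hx3

lemma btwn_of_mem_pathInduced {e : V × V} (he : e ∈ pathInduced E s t) :
    Btwn E s t e.1 e.2 := by
  rw [pathInduced, Finset.mem_filter] at he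
  obtain ⟨heE, P, hP, heP⟩ := he
  obtain ⟨p₁, p₂, rfl, h1, h2⟩ := hP.1.split_edge heP
  exact ⟨_, p₁, [e], p₂, hP, by simp, h1, ⟨heE, rfl, rfl⟩, h2, by simp⟩

lemma btwn_compose {x y z : V} (hxy : Btwn E s t x y) (hyz : Btwn E s t y z) :
    Btwn E s t x z ∨ OppPair E s t := by
  obtain ⟨P, P₁, P₂, P₃, hP, hPe, h1, h2, h3, hne⟩ := hxy
  obtain ⟨Q, Q₁, Q₂, Q₃, hQ, hQe, g1, g2, g3, gne⟩ := hyz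
  have hAw : IsWalk E s y (P₁ ++ P₂) := h1.append' h2
  have hQw : IsWalk E y t (Q₂ ++ Q₃) := g2.append' g3
  have hPnd : (s :: ((P₁ ++ P₂) ++ P₃).map Prod.snd).Nodup := by rw [← hPe]; exact hP.2
  have hAnd : (s :: (P₁ ++ P₂).map Prod.snd).Nodup := by
    refine hPnd.sublist (List.cons_sublist_cons.2 ?_)
    simp only [List.map_append, List.append_assoc]
    exact (List.sublist_append_left _ _).append_left _
  have hQnd : (s :: (Q₁ ++ (Q₂ ++ Q₃)).map Prod.snd).Nodup := by
    rw [← List.append_assoc, ← hQe]; exact hQ.2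
  rw [g1.wv_append] at hQnd
  have hBnd : (y :: (Q₂ ++ Q₃).map Prod.snd).Nodup :=
    hQnd.sublist (List.sublist_append_right _ _)
  by_cases hcross : ∃ w ∈ (s :: (P₁ ++ P₂).map Prod.snd).dropLast,
      w ∈ (Q₂ ++ Q₃).map Prod.snd
  · right
    obtain ⟨w, hw1, hw2⟩ := hcross
    obtain ⟨U₁, U₂, hdl⟩ := List.append_of_mem hw1
    have hAeq : s :: (P₁ ++ P₂).map Prod.snd = U₁ ++ w :: (U₂ ++ [y]) := by
      rw [hAw.wv_eq, hdl]; simp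
    obtain ⟨a₁, a₂, hPsplit, ha1, ha2, hv1, hv2⟩ := hAw.split hAeq
    have ha2ne : a₂ ≠ [] := by rintro rfl; simp at hv2
    obtain ⟨V₁, V₂, hV⟩ := List.append_of_mem hw2
    have hBeq : y :: (Q₂ ++ Q₃).map Prod.snd = (y :: V₁) ++ w :: V₂ := by rw [hV]; simp
    obtain ⟨b₁, b₂, hQsplit, hb1, hb2, hw1', hw2'⟩ := hQw.split hBeq
    have hb1ne : b₁ ≠ [] := by
      rintro rfl
      obtain rfl : y = w := hb1
      simp only [List.map_nil] at hw1'
      have := congrArg List.length hw1'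
      simp at this
    refine ⟨w, y, P, Q, a₁, a₂, P₃, Q₁, b₁, b₂, hP, hQ, ?_, ?_, ha1, ha2, h3, ha2ne,
      g1, hb1, hb2, hb1ne⟩
    · rw [hPe, ← hPsplit]
    · rw [hQe, List.append_assoc, hQsplit, ← List.append_assoc]
  · left
    push_neg at hcross
    refine ⟨(P₁ ++ P₂) ++ (Q₂ ++ Q₃), P₁, P₂ ++ Q₂, Q₃,
      ⟨hAw.append' hQw, ?_⟩, by simp, h1, h2.append' g2, g3, ?_⟩
    · rw [hAw.wv_append]
      refine List.Nodup.append (hAnd.sublist (List.dropLast_sublist _)) hBnd ?_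
      intro w' hw1 hw2
      rcases List.mem_cons.1 hw2 with rfl | hw2'
      · have := hAnd
        rw [hAw.wv_eq] at this
        exact (List.disjoint_of_nodup_append this) hw1 (by simp)
      · exact hcross w' hw1 hw2'
    · rcases P₂ with _ | _
      · exact absurd rfl hne
      · simp

end Main

section Assemble
variable {V : Type*} [DecidableEq V] {E : Finset (V × V)} {a b c d : V}

set_option maxHeartbeats 1000000 in
lemma assemble {r₂ q₂ pm q₄ r₃ : List (V × V)}
    {N₁ N₂ I₂ Z₁ Z₂ L₁ L₂ K M₁ M₂ wvP wvQ : List V}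
    (hPeq : wvP = N₁ ++ a :: N₂ ++ b :: I₂ ++ c :: Z₁ ++ d :: Z₂)
    (hQeq : wvQ = L₁ ++ a :: L₂ ++ c :: K ++ b :: M₁ ++ d :: M₂)
    (hPnd : wvP.Nodup) (hQnd : wvQ.Nodup)
    (hL₂ : ∀ y ∈ L₂, y ∉ wvP) (hM₁ : ∀ y ∈ M₁, y ∉ wvP)
    (hw1 : IsWalk E a b r₂) (hv1 : r₂.map Prod.snd = N₂ ++ [b])
    (hw2 : IsWalk E a c q₂) (hv2 : q₂.map Prod.snd = L₂ ++ [c])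
    (hw3 : IsWalk E b c pm) (hv3 : pm.map Prod.snd = I₂ ++ [c])
    (hw4 : IsWalk E b d q₄) (hv4 : q₄.map Prod.snd = M₁ ++ [d])
    (hw5 : IsWalk E c d r₃) (hv5 : r₃.map Prod.snd = Z₁ ++ [d]) :
    HasWSubdivision E := by
  have hPn : (N₁ ++ a :: N₂ ++ b :: I₂ ++ c :: Z₁ ++ d :: Z₂ : List V).Nodup := hPeq ▸ hPnd
  have hQn : (L₁ ++ a :: L₂ ++ c :: K ++ b :: M₁ ++ d :: M₂ : List V).Nodup := hQeq ▸ hQnd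
  have crossP : ∀ {l₁ l₂ : List V} {x : V},
      (N₁ ++ a :: N₂ ++ b :: I₂ ++ c :: Z₁ ++ d :: Z₂ : List V) = l₁ ++ l₂ →
      x ∈ l₁ → x ∈ l₂ → False := fun he hx hy => nodup_cross hPn he hx hy
  have crossQ : ∀ {l₁ l₂ : List V} {x : V},
      (L₁ ++ a :: L₂ ++ c :: K ++ b :: M₁ ++ d :: M₂ : List V) = l₁ ++ l₂ →
      x ∈ l₁ → x ∈ l₂ → False := fun he hx hy => nodup_cross hQn he hx hy
  have haP : a ∈ wvP := by rw [hPeq]; simp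
  have hbP : b ∈ wvP := by rw [hPeq]; simp
  have hcP : c ∈ wvP := by rw [hPeq]; simp
  have hdP : d ∈ wvP := by rw [hPeq]; simp
  have hN₂P : ∀ x ∈ N₂, x ∈ wvP := fun x hx => by rw [hPeq]; simp [hx]
  have hI₂P : ∀ x ∈ I₂, x ∈ wvP := fun x hx => by rw [hPeq]; simp [hx]
  have hZ₁P : ∀ x ∈ Z₁, x ∈ wvP := fun x hx => by rw [hPeq]; simp [hx]
  -- distinctness
  have hab : a ≠ b := fun h => crossP (x := a) (l₁ := N₁ ++ a :: N₂)
    (l₂ := b :: I₂ ++ c :: Z₁ ++ d :: Z₂) (by simp) (by simp) (by simp [h])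
  have hac : a ≠ c := fun h => crossP (x := a) (l₁ := N₁ ++ a :: N₂ ++ b :: I₂)
    (l₂ := c :: Z₁ ++ d :: Z₂) (by simp) (by simp) (by simp [h])
  have had : a ≠ d := fun h => crossP (x := a) (l₁ := N₁ ++ a :: N₂ ++ b :: I₂ ++ c :: Z₁)
    (l₂ := d :: Z₂) (by simp) (by simp) (by simp [h])
  have hbc : b ≠ c := fun h => crossP (x := b) (l₁ := N₁ ++ a :: N₂ ++ b :: I₂)
    (l₂ := c :: Z₁ ++ d :: Z₂) (by simp) (by simp) (by simp [h])
  have hbd : b ≠ d := fun h => crossP (x := b) (l₁ := N₁ ++ a :: N₂ ++ b :: I₂ ++ c :: Z₁)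
    (l₂ := d :: Z₂) (by simp) (by simp) (by simp [h])
  have hcd : c ≠ d := fun h => crossP (x := c) (l₁ := N₁ ++ a :: N₂ ++ b :: I₂ ++ c :: Z₁)
    (l₂ := d :: Z₂) (by simp) (by simp) (by simp [h])
  -- block disjointness inside P
  have hN₂abcd : ∀ x ∈ N₂, x ≠ a ∧ x ≠ b ∧ x ≠ c ∧ x ≠ d := by
    intro x hx
    refine ⟨fun h => crossP (x := x) (l₁ := N₁ ++ [a]) (l₂ := N₂ ++ b :: I₂ ++ c :: Z₁ ++ d :: Z₂)
        (by simp) (by simp [h]) (by simp [hx]),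
      fun h => crossP (x := x) (l₁ := N₁ ++ a :: N₂) (l₂ := b :: I₂ ++ c :: Z₁ ++ d :: Z₂)
        (by simp) (by simp [hx]) (by simp [h]),
      fun h => crossP (x := x) (l₁ := N₁ ++ a :: N₂) (l₂ := b :: I₂ ++ c :: Z₁ ++ d :: Z₂)
        (by simp) (by simp [hx]) (by simp [h]),
      fun h => crossP (x := x) (l₁ := N₁ ++ a :: N₂) (l₂ := b :: I₂ ++ c :: Z₁ ++ d :: Z₂)
        (by simp) (by simp [hx]) (by simp [h])⟩
  have hI₂abcd : ∀ x ∈ I₂, x ≠ a ∧ x ≠ b ∧ x ≠ c ∧ x ≠ d := by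
    intro x hx
    refine ⟨fun h => crossP (x := x) (l₁ := N₁ ++ [a]) (l₂ := N₂ ++ b :: I₂ ++ c :: Z₁ ++ d :: Z₂)
        (by simp) (by simp [h]) (by simp [hx]),
      fun h => crossP (x := x) (l₁ := N₁ ++ a :: N₂ ++ [b]) (l₂ := I₂ ++ c :: Z₁ ++ d :: Z₂)
        (by simp) (by simp [h]) (by simp [hx]),
      fun h => crossP (x := x) (l₁ := N₁ ++ a :: N₂ ++ b :: I₂) (l₂ := c :: Z₁ ++ d :: Z₂)
        (by simp) (by simp [hx]) (by simp [h]),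
      fun h => crossP (x := x) (l₁ := N₁ ++ a :: N₂ ++ b :: I₂) (l₂ := c :: Z₁ ++ d :: Z₂)
        (by simp) (by simp [hx]) (by simp [h])⟩
  have hZ₁abcd : ∀ x ∈ Z₁, x ≠ a ∧ x ≠ b ∧ x ≠ c ∧ x ≠ d := by
    intro x hx
    refine ⟨fun h => crossP (x := x) (l₁ := N₁ ++ [a]) (l₂ := N₂ ++ b :: I₂ ++ c :: Z₁ ++ d :: Z₂)
        (by simp) (by simp [h]) (by simp [hx]),
      fun h => crossP (x := x) (l₁ := N₁ ++ a :: N₂ ++ [b]) (l₂ := I₂ ++ c :: Z₁ ++ d :: Z₂)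
        (by simp) (by simp [h]) (by simp [hx]),
      fun h => crossP (x := x) (l₁ := N₁ ++ a :: N₂ ++ b :: I₂ ++ [c]) (l₂ := Z₁ ++ d :: Z₂)
        (by simp) (by simp [h]) (by simp [hx]),
      fun h => crossP (x := x) (l₁ := N₁ ++ a :: N₂ ++ b :: I₂ ++ c :: Z₁) (l₂ := d :: Z₂)
        (by simp) (by simp [hx]) (by simp [h])⟩
  have hN₂I₂ : ∀ x ∈ N₂, x ∉ I₂ := fun x hx hy =>
    crossP (x := x) (l₁ := N₁ ++ a :: N₂) (l₂ := b :: I₂ ++ c :: Z₁ ++ d :: Z₂)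
      (by simp) (by simp [hx]) (by simp [hy])
  have hN₂Z₁ : ∀ x ∈ N₂, x ∉ Z₁ := fun x hx hy =>
    crossP (x := x) (l₁ := N₁ ++ a :: N₂) (l₂ := b :: I₂ ++ c :: Z₁ ++ d :: Z₂)
      (by simp) (by simp [hx]) (by simp [hy])
  have hI₂Z₁ : ∀ x ∈ I₂, x ∉ Z₁ := fun x hx hy =>
    crossP (x := x) (l₁ := N₁ ++ a :: N₂ ++ b :: I₂) (l₂ := c :: Z₁ ++ d :: Z₂)
      (by simp) (by simp [hx]) (by simp [hy])
  have hL₂M₁ : ∀ x ∈ L₂, x ∉ M₁ := fun x hx hy =>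
    crossQ (x := x) (l₁ := L₁ ++ a :: L₂) (l₂ := c :: K ++ b :: M₁ ++ d :: M₂)
      (by simp) (by simp [hx]) (by simp [hy])
  -- inner vertex computations
  have hi1 : innerVerts r₂ = N₂ := by simp [innerVerts, hv1]
  have hi2 : innerVerts q₂ = L₂ := by simp [innerVerts, hv2]
  have hi3 : innerVerts pm = I₂ := by simp [innerVerts, hv3]
  have hi4 : innerVerts q₄ = M₁ := by simp [innerVerts, hv4]
  have hi5 : innerVerts r₃ = Z₁ := by simp [innerVerts, hv5]
  refine ⟨a, b, c, d, r₂, q₂, pm, q₄, r₃, by simp [hab, hac, had, hbc, hbd, hcd],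
    (by rintro rfl; simp at hv1), (by rintro rfl; simp at hv2), (by rintro rfl; simp at hv3),
    (by rintro rfl; simp at hv4), (by rintro rfl; simp at hv5),
    ⟨hw1, ?_⟩, ⟨hw2, ?_⟩, ⟨hw3, ?_⟩, ⟨hw4, ?_⟩, ⟨hw5, ?_⟩, ?_, ?_⟩
  · rw [hv1]
    exact nodup_infix hPn (l₁ := N₁) (m := a :: (N₂ ++ [b])) (l₂ := I₂ ++ c :: Z₁ ++ d :: Z₂) (by simp)
  · rw [hv2]
    exact nodup_infix hQn (l₁ := L₁) (m := a :: (L₂ ++ [c])) (l₂ := K ++ b :: M₁ ++ d :: M₂) (by simp)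
  · rw [hv3]
    exact nodup_infix hPn (l₁ := N₁ ++ a :: N₂) (m := b :: (I₂ ++ [c])) (l₂ := Z₁ ++ d :: Z₂) (by simp)
  · rw [hv4]
    exact nodup_infix hQn (l₁ := L₁ ++ a :: L₂ ++ c :: K) (m := b :: (M₁ ++ [d])) (l₂ := M₂) (by simp)
  · rw [hv5]
    exact nodup_infix hPn (l₁ := N₁ ++ a :: N₂ ++ b :: I₂) (m := c :: (Z₁ ++ [d])) (l₂ := Z₂) (by simp)
  · -- inner vertices avoid a b c d
    intro p hp x hx
    simp only [List.mem_cons, List.not_mem_nil, or_false] at hp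
    rcases hp with rfl | rfl | rfl | rfl | rfl
    · rw [hi1] at hx
      obtain ⟨h1, h2, h3, h4⟩ := hN₂abcd x hx
      simp [h1, h2, h3, h4]
    · rw [hi2] at hx
      have := hL₂ x hx
      simp only [List.mem_cons, List.not_mem_nil, or_false]
      push_neg
      exact ⟨fun h => this (h ▸ haP), fun h => this (h ▸ hbP),
        fun h => this (h ▸ hcP), fun h => this (h ▸ hdP)⟩
    · rw [hi3] at hx
      obtain ⟨h1, h2, h3, h4⟩ := hI₂abcd x hx
      simp [h1, h2, h3, h4]
    · rw [hi4] at hx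
      have := hM₁ x hx
      simp only [List.mem_cons, List.not_mem_nil, or_false]
      push_neg
      exact ⟨fun h => this (h ▸ haP), fun h => this (h ▸ hbP),
        fun h => this (h ▸ hcP), fun h => this (h ▸ hdP)⟩
    · rw [hi5] at hx
      obtain ⟨h1, h2, h3, h4⟩ := hZ₁abcd x hx
      simp [h1, h2, h3, h4]
  · -- pairwise disjoint inner vertices
    refine List.Pairwise.cons ?_ (List.Pairwise.cons ?_ (List.Pairwise.cons ?_
      (List.Pairwise.cons ?_ (List.Pairwise.cons ?_ List.Pairwise.nil))))
    · intro q hq x hx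
      simp only [List.mem_cons, List.not_mem_nil, or_false] at hq
      rw [hi1] at hx
      rcases hq with rfl | rfl | rfl | rfl
      · rw [hi2]; exact fun hy => hL₂ x hy (hN₂P x hx)
      · rw [hi3]; exact hN₂I₂ x hx
      · rw [hi4]; exact fun hy => hM₁ x hy (hN₂P x hx)
      · rw [hi5]; exact hN₂Z₁ x hx
    · intro q hq x hx
      simp only [List.mem_cons, List.not_mem_nil, or_false] at hq
      rw [hi2] at hx
      rcases hq with rfl | rfl | rfl
      · rw [hi3]; exact fun hy => hL₂ x hx (hI₂P x hy)
      · rw [hi4]; exact hL₂M₁ x hx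
      · rw [hi5]; exact fun hy => hL₂ x hx (hZ₁P x hy)
    · intro q hq x hx
      simp only [List.mem_cons, List.not_mem_nil, or_false] at hq
      rw [hi3] at hx
      rcases hq with rfl | rfl
      · rw [hi4]; exact fun hy => hM₁ x hy (hI₂P x hx)
      · rw [hi5]; exact hI₂Z₁ x hx
    · intro q hq x hx
      simp only [List.mem_cons, List.not_mem_nil, or_false] at hq
      rw [hi4] at hx
      rcases hq with rfl
      rw [hi5]; exact fun hy => hM₁ x hx (hZ₁P x hy)
    · intro q hq
      simp at hq

end Assemble

section AuxMain
variable {V : Type*} [DecidableEq V] {E : Finset (V × V)} {s t : V}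

set_option maxHeartbeats 1000000 in
lemma oppPair_aux {P Q : List (V × V)} (hP : IsPath E s t P) (hQ : IsPath E s t Q) :
    ∀ n : ℕ, ∀ (b c : V) (P₁ P₂ P₃ Q₁ Q₂ Q₃ : List (V × V)),
      P = P₁ ++ P₂ ++ P₃ → Q = Q₁ ++ Q₂ ++ Q₃ →
      IsWalk E s b P₁ → IsWalk E b c P₂ → IsWalk E c t P₃ → P₂ ≠ [] →
      IsWalk E s c Q₁ → IsWalk E c b Q₂ → IsWalk E b t Q₃ → Q₂ ≠ [] →
      (Q.length + 1) * Q₁.length + Q₃.length < n →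
      HasWSubdivision E := by
  intro n
  induction n with
  | zero => intro _ _ _ _ _ _ _ _ _ _ _ _ _ _ _ _ _ _ h; omega
  | succ n ih =>
    intro b c P₁ P₂ P₃ Q₁ Q₂ Q₃ hPe hQe hw1 hw2 hw3 hne2 hg1 hg2 hg3 gne2 hmeas
    have hM1 : 1 ≤ Q.length + 1 := Nat.le_add_left 1 _
    have hPnd : (s :: (P₁ ++ P₂ ++ P₃).map Prod.snd).Nodup := by rw [← hPe]; exact hP.2
    have hQnd : (s :: (Q₁ ++ Q₂ ++ Q₃).map Prod.snd).Nodup := by rw [← hQe]; exact hQ.2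
    have hQw : IsWalk E s t (Q₁ ++ Q₂ ++ Q₃) := by rw [← hQe]; exact hQ.1
    have hPdec : s :: (P₁ ++ P₂ ++ P₃).map Prod.snd
        = (s :: P₁.map Prod.snd).dropLast ++ ((b :: P₂.map Prod.snd).dropLast
          ++ (c :: P₃.map Prod.snd)) := by
      rw [List.append_assoc, hw1.wv_append, hw2.wv_append]
    have hPdec2 : s :: (P₁ ++ P₂ ++ P₃).map Prod.snd
        = (s :: P₁.map Prod.snd).dropLast ++ (b :: (P₂ ++ P₃).map Prod.snd) := by
      rw [List.append_assoc, hw1.wv_append]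
    have hPdec3 : s :: (P₁ ++ P₂ ++ P₃).map Prod.snd
        = (s :: (P₁ ++ P₂).map Prod.snd).dropLast ++ (c :: P₃.map Prod.snd) :=
      (hw1.append' hw2).wv_append P₃
    obtain ⟨I₂, hI₂⟩ : ∃ I₂, (b :: P₂.map Prod.snd).dropLast = b :: I₂ := by
      rcases P₂ with _ | ⟨e, P₂'⟩
      · exact absurd rfl hne2
      · exact ⟨_, rfl⟩
    obtain ⟨K, hK⟩ : ∃ K, (c :: Q₂.map Prod.snd).dropLast = c :: K := by
      rcases Q₂ with _ | ⟨e, Q₂'⟩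
      · exact absurd rfl gne2
      · exact ⟨_, rfl⟩
    have hsmem : s ∈ (s :: P₁.map Prod.snd).dropLast ++ (b :: P₂.map Prod.snd).dropLast := by
      rcases P₁ with _ | ⟨e, P₁'⟩
      · obtain rfl : s = b := hw1
        rw [hI₂]; simp
      · simp
    have hbmem : b ∈ (s :: P₁.map Prod.snd).dropLast ++ (b :: P₂.map Prod.snd).dropLast := by
      rw [hI₂]; simp
    have htmem : t ∈ c :: P₃.map Prod.snd := by
      rw [← hw3.getLast_eq]; exact List.getLast_mem _
    have hcs : c ≠ s := by
      rintro rfl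
      exact nodup_cross (hPdec ▸ hPnd) (List.append_assoc _ _ _).symm hsmem (by simp)
    have hbt : b ≠ t := by
      rintro rfl
      exact nodup_cross (hPdec ▸ hPnd) (List.append_assoc _ _ _).symm hbmem htmem
    have hbc : b ≠ c := by
      rintro rfl
      exact nodup_cross (hPdec ▸ hPnd) (List.append_assoc _ _ _).symm hbmem (by simp)
    -- choose a : the last vertex of Q strictly before c that lies on P
    have hQ1ne : Q₁ ≠ [] := hg1.ne_nil (fun h => hcs h.symm)
    have hex : ∃ w ∈ (s :: Q₁.map Prod.snd).dropLast,
        w ∈ s :: (P₁ ++ P₂ ++ P₃).map Prod.snd := by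
      refine ⟨s, ?_, by simp⟩
      rcases Q₁ with _ | ⟨e, Q₁'⟩
      · exact absurd rfl hQ1ne
      · simp
    obtain ⟨L₁, a, L₂, hLeq, haP, hL₂⟩ := exists_last_split hex
    have hQdec : s :: (Q₁ ++ Q₂ ++ Q₃).map Prod.snd
        = (s :: Q₁.map Prod.snd).dropLast ++ (c :: (Q₂ ++ Q₃).map Prod.snd) := by
      rw [List.append_assoc, hg1.wv_append]
    have hQbig : s :: (Q₁ ++ Q₂ ++ Q₃).map Prod.snd
        = L₁ ++ a :: (L₂ ++ (c :: (Q₂ ++ Q₃).map Prod.snd)) := by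
      rw [hQdec, hLeq]; simp
    obtain ⟨q₁, q₅, hQsp1, hq1w, hq5w, hq1v, hq5v⟩ := hQw.split hQbig
    have h5big : a :: q₅.map Prod.snd = (a :: L₂) ++ c :: (Q₂ ++ Q₃).map Prod.snd := by
      rw [hq5v]; simp
    obtain ⟨q₂', qr, hQsp2, hq2w, hqrw, hq2v, hqrv⟩ := hq5w.split h5big
    have hrbig : c :: qr.map Prod.snd = (c :: K) ++ b :: Q₃.map Prod.snd := by
      rw [hqrv, ← hK]
      exact hg2.wv_append Q₃
    obtain ⟨q₃', q₆, hQsp3, hq3w, hq6w, hq3v, hq6v⟩ := hqrw.split hrbig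
    have hq2ne : q₂' ≠ [] := by
      rintro rfl
      have := congrArg List.length hq2v; simp at this
    have hq3ne : q₃' ≠ [] := hq3w.ne_nil (fun h => hbc h.symm)
    have hQfull : s :: (Q₁ ++ Q₂ ++ Q₃).map Prod.snd
        = L₁ ++ a :: L₂ ++ c :: K ++ b :: Q₃.map Prod.snd := by
      rw [hQdec, hLeq, hg2.wv_append Q₃, hK]; simp
    have hlen1 : q₁.length = L₁.length := by
      have := congrArg List.length hq1v; simpa using this
    have hlenQ₁ : Q₁.length = L₁.length + L₂.length + 1 := by
      have := congrArg List.length hLeq; simp at this; omega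
    have hq2len : q₂'.length = L₂.length + 1 := by
      have := congrArg List.length hq2v; simpa using this
    have hq6len : q₆.length = Q₃.length := by
      have := congrArg List.length hq6v; simpa using this
    -- case analysis on the position of a on P
    have haPcases := haP
    rw [hPdec2] at haPcases
    rcases List.mem_append.1 haPcases with hgood_a | hbad
    · -- a is strictly before b on P ; now choose d
      have hq6ne : q₆ ≠ [] := hq6w.ne_nil hbt
      have hex2 : ∃ w ∈ q₆.map Prod.snd, w ∈ s :: (P₁ ++ P₂ ++ P₃).map Prod.snd := by
        refine ⟨t, ?_, ?_⟩
        · have h := hq6w.getLast_eq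
          rw [List.getLast_cons (by simpa using hq6ne)] at h
          rw [← h]; exact List.getLast_mem _
        · rw [hPdec]
          exact List.mem_append.2 (Or.inr (List.mem_append.2 (Or.inr htmem)))
      obtain ⟨M₁, d, M₂, hMeq, hdP, hM₁⟩ := exists_first_split hex2
      have h6big : b :: q₆.map Prod.snd = (b :: M₁) ++ d :: M₂ := by rw [hMeq]; simp
      obtain ⟨q₄', q₇, hQsp4, hq4w, hq7w, hq4v, hq7v⟩ := hq6w.split h6big
      have hq4ne : q₄' ≠ [] := by
        rintro rfl; have := congrArg List.length hq4v; simp at this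
      have hQfull2 : s :: (Q₁ ++ Q₂ ++ Q₃).map Prod.snd
          = L₁ ++ a :: L₂ ++ c :: K ++ b :: M₁ ++ d :: M₂ := by
        rw [hQfull, ← hq6v, hMeq]; simp
      have hdc : d ≠ c := by
        intro h
        exact nodup_cross (hQfull2 ▸ hQnd)
          (l₁ := L₁ ++ a :: L₂ ++ c :: K ++ b :: M₁) (l₂ := d :: M₂) (x := d)
          (by simp) (by simp [h]) (by simp)
      have hdPcases := hdP
      rw [hPdec3] at hdPcases
      rcases List.mem_append.1 hdPcases with hbad2 | hgood_d
      · -- BAD CASE 2 : d strictly before c on P ; recurse with pair (d, c)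
        obtain ⟨X₁, X₂, hX⟩ := List.append_of_mem hbad2
        have hw12 : IsWalk E s c (P₁ ++ P₂) := hw1.append' hw2
        have hXbig : s :: (P₁ ++ P₂).map Prod.snd = X₁ ++ d :: (X₂ ++ [c]) := by
          rw [hw12.wv_eq, hX]; simp
        obtain ⟨n₁, n₂, hnsp, hn1w, hn2w, hn1v, hn2v⟩ := hw12.split hXbig
        have hn2ne : n₂ ≠ [] := by
          rintro rfl; have := congrArg List.length hn2v; simp at this
        refine ih d c n₁ n₂ P₃ (q₁ ++ q₂') (q₃' ++ q₄') q₇ ?_ ?_ hn1w hn2w hw3 hn2ne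
          (hq1w.append' hq2w) (hq3w.append' hq4w) hq7w
          (fun h => hq3ne (List.append_eq_nil_iff.1 h).1) ?_
        · rw [hPe, hnsp]
        · rw [hQe, hQsp1, hQsp2, hQsp3, hQsp4]; simp
        · have hq7len : q₇.length = M₂.length := by
            have := congrArg List.length hq7v; simpa using this
          have hq6len2 : Q₃.length = M₁.length + M₂.length + 1 := by
            have := congrArg List.length (hq6v.symm.trans hMeq); simp at this; omega
          have heq : (q₁ ++ q₂').length = Q₁.length := by
            rw [List.length_append]; omega
          rw [heq, hq7len]
          have : (Q.length + 1) * Q₁.length + Q₃.length < n + 1 := hmeas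
          linarith
      · -- GOOD CASE : assemble the W subdivision
        have hd3 : d ∈ P₃.map Prod.snd := by
          rcases List.mem_cons.1 hgood_d with h | h
          · exact absurd h hdc
          · exact h
        obtain ⟨Z₁, Z₂, hZ⟩ := List.append_of_mem hd3
        have hZbig : c :: P₃.map Prod.snd = (c :: Z₁) ++ d :: Z₂ := by rw [hZ]; simp
        obtain ⟨r₃, r₄, hrsp2, hr3w, hr4w, hr3v, hr4v⟩ := hw3.split hZbig
        obtain ⟨N₁, N₂, hN⟩ := List.append_of_mem hgood_a
        have hNbig : s :: P₁.map Prod.snd = N₁ ++ a :: (N₂ ++ [b]) := by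
          rw [hw1.wv_eq, hN]; simp
        obtain ⟨r₁, r₂, hrsp, hr1w, hr2w, hr1v, hr2v⟩ := hw1.split hNbig
        have hPfull : s :: (P₁ ++ P₂ ++ P₃).map Prod.snd
            = N₁ ++ a :: N₂ ++ b :: I₂ ++ c :: Z₁ ++ d :: Z₂ := by
          rw [hPdec, hN, hI₂, hZ]; simp
        have hv2' : q₂'.map Prod.snd = L₂ ++ [c] := by
          have := hq2v; simpa using this
        have hv3' : P₂.map Prod.snd = I₂ ++ [c] := by
          have := hw2.wv_eq; rw [hI₂] at this; simpa using this
        have hv4' : q₄'.map Prod.snd = M₁ ++ [d] := by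
          have := hq4v; simpa using this
        have hv5' : r₃.map Prod.snd = Z₁ ++ [d] := by
          have := hr3v; simpa using this
        exact assemble hPfull hQfull2 hPnd hQnd hL₂ hM₁
          hr2w hr2v hq2w hv2' hw2 hv3' hq4w hv4' hr3w hv5'
    · -- BAD CASE 1 : a is at or after b on P ; recurse with pair (b, a)
      have hab : a ≠ b := by
        intro h
        exact nodup_cross (hQfull ▸ hQnd)
          (l₁ := L₁ ++ a :: L₂ ++ c :: K) (l₂ := b :: Q₃.map Prod.snd) (x := a)
          (by simp) (by simp) (by simp [h])
      have ha23 : a ∈ (P₂ ++ P₃).map Prod.snd := by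
        rcases List.mem_cons.1 hbad with h | h
        · exact absurd h hab
        · exact h
      obtain ⟨Y₁, Y₂, hY⟩ := List.append_of_mem ha23
      have hw23 : IsWalk E b t (P₂ ++ P₃) := hw2.append' hw3
      have hYbig : b :: (P₂ ++ P₃).map Prod.snd = (b :: Y₁) ++ a :: Y₂ := by
        rw [hY]; simp
      obtain ⟨m₁, m₂, hm, hm1w, hm2w, hm1v, hm2v⟩ := hw23.split hYbig
      have hm1ne : m₁ ≠ [] := by
        rintro rfl; have := congrArg List.length hm1v; simp at this
      refine ih b a P₁ m₁ m₂ q₁ (q₂' ++ q₃') q₆ ?_ ?_ hw1 hm1w hm2w hm1ne hq1w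
        (hq2w.append' hq3w) hq6w (fun h => hq2ne (List.append_eq_nil_iff.1 h).1) ?_
      · rw [hPe, List.append_assoc, hm, ← List.append_assoc]
      · rw [hQe, hQsp1, hQsp2, hQsp3]; simp
      · have hlt : q₁.length < Q₁.length := by omega
        have hmul : (Q.length + 1) * q₁.length + (Q.length + 1)
            ≤ (Q.length + 1) * Q₁.length := by
          calc (Q.length + 1) * q₁.length + (Q.length + 1)
              = (Q.length + 1) * (q₁.length + 1) := by ring
          _ ≤ (Q.length + 1) * Q₁.length := Nat.mul_le_mul_left _ hlt
        rw [hq6len]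
        have : (Q.length + 1) * Q₁.length + Q₃.length < n + 1 := hmeas
        linarith

lemma oppPair_hasW (h : OppPair E s t) : HasWSubdivision E := by
  obtain ⟨b, c, P, Q, P₁, P₂, P₃, Q₁, Q₂, Q₃, hP, hQ, hPe, hQe,
    hw1, hw2, hw3, hne2, hg1, hg2, hg3, gne2⟩ := h
  exact oppPair_aux hP hQ ((Q.length + 1) * Q₁.length + Q₃.length + 1) b c
    P₁ P₂ P₃ Q₁ Q₂ Q₃ hPe hQe hw1 hw2 hw3 hne2 hg1 hg2 hg3 gne2 (Nat.lt_succ_self _)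

end AuxMain

section Chain
variable {V : Type*} [DecidableEq V] {E : Finset (V × V)} {s t : V}

lemma chain_btwn_of_walk {x v : V} {p : List (V × V)}
    (h : IsWalk (pathInduced E s t) x v p) :
    List.Chain (Btwn E s t) x (p.map Prod.snd) := by
  induction p generalizing x with
  | nil => exact List.Chain.nil
  | cons e p ih =>
    obtain ⟨he, hfst, hw⟩ := h
    exact List.Chain.cons (hfst ▸ btwn_of_mem_pathInduced he) (ih hw)

lemma oppPair_of_chain :
    ∀ (l : List V) (x : V) (hne : l ≠ []), List.Chain (Btwn E s t) x l →
      l.getLast hne = x → OppPair E s t := by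
  intro l
  induction l with
  | nil => intro x hne; exact absurd rfl hne
  | cons y l ih =>
    intro x _ hchain hlast
    rcases List.chain_cons.1 hchain with ⟨hxy, hchain'⟩
    rcases l with _ | ⟨z, l'⟩
    · simp at hlast
      subst hlast
      exact absurd hxy btwn_irrefl
    · rcases List.chain_cons.1 hchain' with ⟨hyz, hchain''⟩
      rcases btwn_compose hxy hyz with hxz | hinv
      · refine ih x (by simp) (List.chain_cons.2 ⟨hxz, hchain''⟩) ?_
        simpa [List.getLast_cons] using hlast
      · exact hinv

lemma oppPair_of_cycle {x : V} {p : List (V × V)} (hne : p ≠ [])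
    (hcyc : IsWalk (pathInduced E s t) x x p) : OppPair E s t := by
  have hchain := chain_btwn_of_walk hcyc
  have hmapne : p.map Prod.snd ≠ [] := by simpa using hne
  refine oppPair_of_chain (p.map Prod.snd) x hmapne hchain ?_
  have := hcyc.getLast_eq
  rwa [List.getLast_cons hmapne] at this

end Chain

/-- if, for some vertex pair `(s,t)`, the subgraph `P_G(s,t)` induced by the
edges on `s`-`t` paths contains a cycle (a nonempty closed walk), then `G` contains a
subgraph homeomorphic to `W`. -/
theorem cycle_in_pathInduced_gives_W_subdivision [Fintype V] [DecidableEq V]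
    (E : Finset (V × V)) (s t x : V) (p : List (V × V)) (hne : p ≠ [])
    (hcyc : IsWalk (pathInduced E s t) x x p) :
    HasWSubdivision E :=
  oppPair_hasW (oppPair_of_cycle hne hcyc)
end

section
/- Let G = (V,E) be a directed graph satisfying Property P1 (every P_G(s,t) is edgeless or an s-t-DSP) with unit capacities, let α ∈ (0,1), and consider covering requirements only for pairs (u,v) with uv ∈ E. If the edge sets {E(P_G(e))}_{e∈E} additionally form a laminar family (Property P2), then for every edge uv ∈ E, every u-v path of G is contained entirely within the unique maximal edge-attributed subgraph containing the edge uv. Consequently, whether an edge set E' covers the pair (u,v) depends only on E' ∩ E(P_G(uv)). -/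
open scoped Classical

variable {V : Type*}

lemma walk_mem_edges {E : Finset (V × V)} :
    ∀ {u v : V} {p : List (V × V)}, IsWalk E u v p → ∀ x ∈ p, x ∈ E := by
  intro u v p
  induction p generalizing u with
  | nil => intro _ x hx; simp at hx
  | cons e p ih =>
    rintro ⟨he, _, hw⟩ x hx
    rcases List.mem_cons.1 hx with rfl | hx
    · exact he
    · exact ih hw x hx

lemma walk_restrict {E F : Finset (V × V)} :
    ∀ {u v : V} {p : List (V × V)}, IsWalk E u v p → (∀ x ∈ p, x ∈ F) →
      IsWalk F u v p := by
  intro u v p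
  induction p generalizing u with
  | nil => intro h _; exact h
  | cons e p ih =>
    rintro ⟨he, h1, hw⟩ hF
    exact ⟨hF e (List.mem_cons_self), h1, ih hw fun x hx => hF x (List.mem_cons_of_mem _ hx)⟩

lemma walk_mono {E F : Finset (V × V)} (hEF : E ⊆ F) {u v : V} {p : List (V × V)}
    (h : IsWalk E u v p) : IsWalk F u v p :=
  walk_restrict h fun x hx => hEF (walk_mem_edges h x hx)

lemma suffix_path {E : Finset (V × V)} {v : V} :
    ∀ {a : V} {q : List (V × V)}, IsWalk E a v q → (a :: q.map Prod.snd).Nodup →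
      ∀ u ∈ a :: q.map Prod.snd, ∃ q', (∀ x ∈ q', x ∈ q) ∧ IsPath E u v q' := by
  intro a q
  induction q generalizing a with
  | nil =>
    intro hw hnd u hu
    simp only [List.map_nil, List.mem_singleton] at hu
    subst hu
    exact ⟨[], by simp, hw, by simp⟩
  | cons e q ih =>
    rintro ⟨he, h1, hw⟩ hnd u hu
    rcases List.mem_cons.1 hu with rfl | hu
    · exact ⟨e :: q, fun x hx => hx, ⟨he, h1, hw⟩, hnd⟩
    · simp only [List.map_cons] at hnd hu
      obtain ⟨q', hq', hp⟩ := ih hw hnd.of_cons u hu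
      exact ⟨q', fun x hx => List.mem_cons_of_mem _ (hq' x hx), hp⟩

lemma walk_to_path {E : Finset (V × V)} {v : V} :
    ∀ {u : V} {p : List (V × V)}, IsWalk E u v p →
      ∃ q, IsPath E u v q ∧ ∀ x ∈ q, x ∈ p := by
  intro u p
  induction p generalizing u with
  | nil => intro hw; exact ⟨[], ⟨hw, by simp⟩, by simp⟩
  | cons e p ih =>
    rintro ⟨he, h1, hw⟩
    obtain ⟨q, ⟨hqw, hqnd⟩, hq⟩ := ih hw
    by_cases hu : u ∈ e.2 :: q.map Prod.snd
    · obtain ⟨q', hq', hp⟩ := suffix_path hqw hqnd u hu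
      exact ⟨q', hp, fun x hx => List.mem_cons_of_mem _ (hq x (hq' x hx))⟩
    · refine ⟨e :: q, ⟨⟨he, h1, hqw⟩, ?_⟩, ?_⟩
      · simp only [List.map_cons]
        exact List.nodup_cons.2 ⟨hu, hqnd⟩
      · intro x hx
        rcases List.mem_cons.1 hx with rfl | hx
        · exact List.mem_cons_self
        · exact List.mem_cons_of_mem _ (hq x hx)

def flowSet (E : Finset (V × V)) (u v : V) : Set ℕ :=
  {n : ℕ | ∃ ps : List (List (V × V)), ps.length = n ∧
    (∀ p ∈ ps, IsWalk E u v p) ∧ ps.Pairwise fun p q => ∀ e ∈ p, e ∉ q}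

lemma maxFlow_eq (E : Finset (V × V)) (u v : V) :
    maxFlow E u v = sSup (flowSet E u v) := rfl

lemma flowSet_nonempty (E : Finset (V × V)) (u v : V) : (flowSet E u v).Nonempty :=
  ⟨0, [], by simp⟩

lemma flowSet_le_card {E : Finset (V × V)} {u v : V} (huv : u ≠ v) :
    ∀ n ∈ flowSet E u v, n ≤ E.card := by
  rintro n ⟨ps, rfl, hw, hpw⟩
  have hne : ∀ p ∈ ps, p ≠ [] := by
    intro p hp hnil
    subst hnil
    exact huv (hw [] hp)
  have hpw' : ps.Pairwise fun p q => p.head? ≠ q.head? := by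
    refine hpw.imp_of_mem ?_
    intro p q hp hq h hpq
    obtain ⟨a, p', rfl⟩ := List.exists_cons_of_ne_nil (hne p hp)
    have : a ∈ q := by
      have := hpq ▸ (List.head?_cons (a := a) (l := p'))
      obtain ⟨b, q', rfl⟩ := List.exists_cons_of_ne_nil (hne q hq)
      simp only [List.head?_cons, Option.some.injEq] at this
      subst this
      exact List.mem_cons_self
    exact h a (List.mem_cons_self) this
  have hnd : (ps.map List.head?).Nodup := List.pairwise_map.2 hpw'
  have hsub : (ps.map List.head?).toFinset ⊆ E.image some := by
    intro x hx
    simp only [List.mem_toFinset, List.mem_map] at hx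
    obtain ⟨p, hp, rfl⟩ := hx
    obtain ⟨a, p', rfl⟩ := List.exists_cons_of_ne_nil (hne p hp)
    simp only [List.head?_cons]
    exact Finset.mem_image_of_mem _ ((hw _ hp).1)
  calc ps.length = (ps.map List.head?).length := (List.length_map _).symm
    _ = (ps.map List.head?).toFinset.card := (List.toFinset_card_of_nodup hnd).symm
    _ ≤ (E.image some).card := Finset.card_le_card hsub
    _ ≤ E.card := Finset.card_image_le

lemma flowSet_bdd {E : Finset (V × V)} {u v : V} (huv : u ≠ v) :
    BddAbove (flowSet E u v) :=
  ⟨E.card, fun n hn => flowSet_le_card huv n hn⟩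

lemma maxFlow_mono {E F : Finset (V × V)} (hEF : E ⊆ F) {u v : V} (huv : u ≠ v) :
    maxFlow E u v ≤ maxFlow F u v := by
  refine csSup_le_csSup (flowSet_bdd huv) (flowSet_nonempty E u v) ?_
  rintro n ⟨ps, rfl, hw, hpw⟩
  exact ⟨ps, rfl, fun p hp => walk_mono hEF (hw p hp), hpw⟩

lemma maxFlow_restrict [DecidableEq V] {E E' : Finset (V × V)} (hE' : E' ⊆ E) {u v : V} (huv : u ≠ v) :
    maxFlow E' u v ≤ maxFlow (E' ∩ pathInduced E u v) u v := by
  refine csSup_le_csSup (flowSet_bdd huv) (flowSet_nonempty E' u v) ?_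
  rintro n ⟨ps, rfl, hw, hpw⟩
  classical
  set g : List (V × V) → List (V × V) := fun p =>
    if h : IsWalk E' u v p then (walk_to_path h).choose else [] with hg
  have hgspec : ∀ p ∈ ps, IsPath E' u v (g p) ∧ ∀ x ∈ g p, x ∈ p := by
    intro p hp
    have h := hw p hp
    simp only [hg, dif_pos h]
    exact (walk_to_path h).choose_spec
  refine ⟨ps.map g, by simp, ?_, ?_⟩
  · intro q hq
    simp only [List.mem_map] at hq
    obtain ⟨p, hp, rfl⟩ := hq
    obtain ⟨⟨hgw, hgnd⟩, _⟩ := hgspec p hp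
    refine walk_restrict hgw ?_
    intro x hx
    refine Finset.mem_inter.2 ⟨walk_mem_edges hgw x hx, ?_⟩
    refine Finset.mem_filter.2 ⟨hE' (walk_mem_edges hgw x hx), g p, ⟨walk_mono hE' hgw, hgnd⟩, hx⟩
  · refine List.pairwise_map.2 (hpw.imp_of_mem ?_)
    intro p q hp hq h x hxp hxq
    exact h x ((hgspec p hp).2 x hxp) ((hgspec q hq).2 x hxq)

lemma maxFlow_restrict_eq [DecidableEq V] {E E' : Finset (V × V)} (hE' : E' ⊆ E) {u v : V} (huv : u ≠ v) :
    maxFlow (E' ∩ pathInduced E u v) u v = maxFlow E' u v :=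
  le_antisymm (maxFlow_mono (Finset.inter_subset_left) huv) (maxFlow_restrict hE' huv)

lemma mem_pathInduced_self {E : Finset (V × V)} {e : V × V} (he : e ∈ E)
    (hne : e.1 ≠ e.2) : e ∈ pathInduced E e.1 e.2 := by
  refine Finset.mem_filter.2 ⟨he, [e], ⟨⟨he, rfl, rfl⟩, by simp [hne]⟩, List.mem_cons_self⟩

/-- in a laminar series-parallel graph (Properties P1 and P2), for every edge
`e = uv` there is a unique maximal edge-attributed subgraph containing `e`; every `u`-`v`
path of `G` lies entirely within it, and whether an edge set `E'` covers the pair `(u,v)`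
with ratio `α` depends only on `E' ∩ E(P_G(uv))`. -/
theorem meas_contains_all_paths [Fintype V] [DecidableEq V] (E : Finset (V × V))
    (hsimple : ∀ e ∈ E, e.1 ≠ e.2)
    (hP1 : ∀ s t : V, pathInduced E s t = ∅ ∨ IsDSP (pathInduced E s t) s t)
    (hP2 : ∀ e₁ ∈ E, ∀ e₂ ∈ E,
      pathInduced E e₁.1 e₁.2 ⊆ pathInduced E e₂.1 e₂.2 ∨
      pathInduced E e₂.1 e₂.2 ⊆ pathInduced E e₁.1 e₁.2 ∨
      Disjoint (pathInduced E e₁.1 e₁.2) (pathInduced E e₂.1 e₂.2))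
    (α : ℝ) (hα0 : 0 < α) (hα1 : α < 1) :
    ∀ e ∈ E, ∃ f ∈ E,
      e ∈ pathInduced E f.1 f.2 ∧
      (∀ g ∈ E, pathInduced E f.1 f.2 ⊆ pathInduced E g.1 g.2 →
        pathInduced E g.1 g.2 = pathInduced E f.1 f.2) ∧
      (∀ f' ∈ E, e ∈ pathInduced E f'.1 f'.2 →
        (∀ g ∈ E, pathInduced E f'.1 f'.2 ⊆ pathInduced E g.1 g.2 →
          pathInduced E g.1 g.2 = pathInduced E f'.1 f'.2) →
        pathInduced E f'.1 f'.2 = pathInduced E f.1 f.2) ∧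
      (∀ p, IsPath E e.1 e.2 p → ∀ x ∈ p, x ∈ pathInduced E f.1 f.2) ∧
      (∀ E' ⊆ E,
        (α * (maxFlow E e.1 e.2 : ℝ) ≤ (maxFlow E' e.1 e.2 : ℝ) ↔
          α * (maxFlow E e.1 e.2 : ℝ) ≤
            (maxFlow (E' ∩ pathInduced E e.1 e.2) e.1 e.2 : ℝ))) := by
  intro e he
  have hne : e.1 ≠ e.2 := hsimple e he
  -- the set of edges g with e ∈ P(g)
  set S : Finset (V × V) := E.filter (fun g => e ∈ pathInduced E g.1 g.2) with hS
  have heS : e ∈ S := Finset.mem_filter.2 ⟨he, mem_pathInduced_self he hne⟩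
  obtain ⟨f, hfS, hfmax⟩ := S.exists_max_image (fun g => (pathInduced E g.1 g.2).card)
    ⟨e, heS⟩
  have hfE : f ∈ E := (Finset.mem_filter.1 hfS).1
  have hef : e ∈ pathInduced E f.1 f.2 := (Finset.mem_filter.1 hfS).2
  have hmax : ∀ g ∈ E, pathInduced E f.1 f.2 ⊆ pathInduced E g.1 g.2 →
      pathInduced E g.1 g.2 = pathInduced E f.1 f.2 := by
    intro g hg hsub
    have hgS : g ∈ S := Finset.mem_filter.2 ⟨hg, hsub hef⟩
    exact (Finset.eq_of_subset_of_card_le hsub (hfmax g hgS)).symm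
  refine ⟨f, hfE, hef, hmax, ?_, ?_, ?_⟩
  · -- uniqueness
    intro f' hf'E hef' hf'max
    rcases hP2 f' hf'E f hfE with h | h | h
    · exact (hf'max f hfE h).symm
    · have hf'S : f' ∈ S := Finset.mem_filter.2 ⟨hf'E, hef'⟩
      exact (Finset.eq_of_subset_of_card_le h (hfmax f' hf'S)).symm
    · exact absurd hef (Finset.disjoint_left.1 h hef')
  · -- all e.1-e.2 paths lie in P(f)
    have hPef : pathInduced E e.1 e.2 ⊆ pathInduced E f.1 f.2 := by
      rcases hP2 e he f hfE with h | h | h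
      · exact h
      · exact (Finset.eq_of_subset_of_card_le h (hfmax e heS)).symm ▸ subset_rfl
      · exact absurd hef (Finset.disjoint_left.1 h (mem_pathInduced_self he hne))
    intro p hp x hx
    refine hPef (Finset.mem_filter.2 ⟨walk_mem_edges hp.1 x hx, p, hp, hx⟩)
  · -- covering depends only on E' ∩ P(e)
    intro E' hE'
    rw [maxFlow_restrict_eq hE' hne]
end

section
/- Let G be the directed graph obtained from a set cover instance (U, S) as follows: vertices are {v_u : u ∈ U} ∪ {x^u_S, y^u_S : S ∈ S, u ∈ S} ∪ {v_S : S ∈ S} ∪ {z_S : S ∈ S} ∪ {t}; edges are the two length-2 paths v_u→x^u_S→v_S and v_u→y^u_S→v_S for each S ∋ u, the path v_S→z_S→t for each S, the green edges v_S→t, and the red edges v_u→t; all with unit capacity. Then for each u ∈ U, the maximum flow value from v_u to t in G is 2f(u)+1, where f(u) = |{S ∈ S : u ∈ S}|. -/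
open scoped Classical

variable {V : Type*}

/-- Vertices of the graph built from a set cover instance `(U, 𝒮)`: the item vertices
`v_u`, the path vertices `x^u_S` and `y^u_S`, the set vertices `v_S`, the vertices `z_S`,
and the sink `t`. -/
inductive SCV (U : Type) where
  | vu : U → SCV U
  | xv : U → Finset U → SCV U
  | yv : U → Finset U → SCV U
  | vS : Finset U → SCV U
  | zS : Finset U → SCV U
  | t : SCV U
  deriving DecidableEq

/-- The graph of the reduction: paths `v_u→x^u_S→v_S` and `v_u→y^u_S→v_S` for `u ∈ S ∈ 𝒮`,
paths `v_S→z_S→t`, green edges `v_S→t`, and red edges `v_u→t`. -/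
def scGraph {U : Type} [DecidableEq U] [Fintype U] (𝒮 : Finset (Finset U)) :
    Finset (SCV U × SCV U) :=
  (𝒮.biUnion fun S => S.biUnion fun u =>
      {(SCV.vu u, SCV.xv u S), (SCV.xv u S, SCV.vS S),
       (SCV.vu u, SCV.yv u S), (SCV.yv u S, SCV.vS S)}) ∪
  (𝒮.biUnion fun S => {(SCV.vS S, SCV.zS S), (SCV.zS S, SCV.t), (SCV.vS S, SCV.t)}) ∪
  (Finset.univ.image fun u : U => (SCV.vu u, SCV.t))

section SCAux

variable {U : Type} [DecidableEq U] [Fintype U]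

instance : Inhabited (SCV U) := ⟨SCV.t⟩

/-- First path `v_u → x^u_S → v_S → z_S → t`. -/
def scP1 (u : U) (S : Finset U) : List (SCV U × SCV U) :=
  [(SCV.vu u, SCV.xv u S), (SCV.xv u S, SCV.vS S), (SCV.vS S, SCV.zS S), (SCV.zS S, SCV.t)]

/-- Second path `v_u → y^u_S → v_S → t`. -/
def scP2 (u : U) (S : Finset U) : List (SCV U × SCV U) :=
  [(SCV.vu u, SCV.yv u S), (SCV.yv u S, SCV.vS S), (SCV.vS S, SCV.t)]

/-- Out-edges of `v_u` in the reduction graph. -/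
def scOut (𝒮 : Finset (Finset U)) (u : U) : Finset (SCV U × SCV U) :=
  ((𝒮.filter fun S => u ∈ S).biUnion fun S =>
    {(SCV.vu u, SCV.xv u S), (SCV.vu u, SCV.yv u S)}) ∪ {(SCV.vu u, SCV.t)}

lemma mem_scOut {𝒮 : Finset (Finset U)} {u : U} :
    ∀ e ∈ scGraph 𝒮, e.1 = SCV.vu u → e ∈ scOut 𝒮 u := by
  rintro ⟨a, b⟩ he h1
  simp only at h1
  subst h1
  simp only [scGraph, Finset.mem_union, Finset.mem_biUnion, Finset.mem_insert,
    Finset.mem_singleton, Finset.mem_image, Finset.mem_univ, true_and] at he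
  simp only [scOut, Finset.mem_union, Finset.mem_biUnion, Finset.mem_filter,
    Finset.mem_insert, Finset.mem_singleton]
  rcases he with ((⟨S, hS, u', hu', h⟩) | ⟨S, hS, h⟩) | ⟨u', h⟩
  · rcases h with h | h | h | h <;>
      simp only [Prod.mk.injEq, SCV.vu.injEq, SCV.xv.injEq, SCV.yv.injEq] at h
    · obtain ⟨rfl, rfl⟩ := h
      exact Or.inl ⟨S, ⟨hS, hu'⟩, Or.inl rfl⟩
    · exact absurd h.1 (by simp)
    · obtain ⟨rfl, rfl⟩ := h
      exact Or.inl ⟨S, ⟨hS, hu'⟩, Or.inr rfl⟩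
    · exact absurd h.1 (by simp)
  · rcases h with h | h | h <;> simp only [Prod.mk.injEq] at h <;>
      exact absurd h.1 (by simp)
  · simp only [Prod.mk.injEq, SCV.vu.injEq] at h
    exact Or.inr (by rw [h.2])

omit [Fintype U] in
lemma card_scOut (𝒮 : Finset (Finset U)) (u : U) :
    (scOut 𝒮 u).card = 2 * (𝒮.filter fun S => u ∈ S).card + 1 := by
  rw [scOut, Finset.card_union_of_disjoint, Finset.card_biUnion]
  · simp [Finset.card_insert_of_notMem, mul_comm, Finset.sum_const]
  · intro S hS S' hS' hne
    simp only [Finset.disjoint_left, Finset.mem_insert, Finset.mem_singleton]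
    rintro e (rfl | rfl) <;> simp [Prod.ext_iff, hne]
  · simp only [Finset.disjoint_left, Finset.mem_biUnion, Finset.mem_insert,
      Finset.mem_singleton]
    rintro e ⟨S, hS, rfl | rfl⟩ <;> simp

lemma scP1_isWalk {𝒮 : Finset (Finset U)} {u : U} {S : Finset U}
    (hS : S ∈ 𝒮) (hu : u ∈ S) : IsWalk (scGraph 𝒮) (SCV.vu u) SCV.t (scP1 u S) := by
  have h1 : (SCV.vu u, SCV.xv u S) ∈ scGraph 𝒮 := by
    simp only [scGraph, Finset.mem_union, Finset.mem_biUnion]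
    exact Or.inl (Or.inl ⟨S, hS, u, hu, by simp⟩)
  have h2 : (SCV.xv u S, SCV.vS S) ∈ scGraph 𝒮 := by
    simp only [scGraph, Finset.mem_union, Finset.mem_biUnion]
    exact Or.inl (Or.inl ⟨S, hS, u, hu, by simp⟩)
  have h3 : (SCV.vS S, SCV.zS S) ∈ scGraph 𝒮 := by
    simp only [scGraph, Finset.mem_union, Finset.mem_biUnion]
    exact Or.inl (Or.inr ⟨S, hS, by simp⟩)
  have h4 : (SCV.zS S, SCV.t) ∈ scGraph 𝒮 := by
    simp only [scGraph, Finset.mem_union, Finset.mem_biUnion]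
    exact Or.inl (Or.inr ⟨S, hS, by simp⟩)
  exact ⟨h1, rfl, h2, rfl, h3, rfl, h4, rfl, rfl⟩

lemma scP2_isWalk {𝒮 : Finset (Finset U)} {u : U} {S : Finset U}
    (hS : S ∈ 𝒮) (hu : u ∈ S) : IsWalk (scGraph 𝒮) (SCV.vu u) SCV.t (scP2 u S) := by
  have h1 : (SCV.vu u, SCV.yv u S) ∈ scGraph 𝒮 := by
    simp only [scGraph, Finset.mem_union, Finset.mem_biUnion]
    exact Or.inl (Or.inl ⟨S, hS, u, hu, by simp⟩)
  have h2 : (SCV.yv u S, SCV.vS S) ∈ scGraph 𝒮 := by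
    simp only [scGraph, Finset.mem_union, Finset.mem_biUnion]
    exact Or.inl (Or.inl ⟨S, hS, u, hu, by simp⟩)
  have h3 : (SCV.vS S, SCV.t) ∈ scGraph 𝒮 := by
    simp only [scGraph, Finset.mem_union, Finset.mem_biUnion]
    exact Or.inl (Or.inr ⟨S, hS, by simp⟩)
  exact ⟨h1, rfl, h2, rfl, h3, rfl, rfl⟩

lemma scRed_isWalk {𝒮 : Finset (Finset U)} {u : U} :
    IsWalk (scGraph 𝒮) (SCV.vu u) SCV.t [(SCV.vu u, SCV.t)] := by
  refine ⟨?_, rfl, rfl⟩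
  simp only [scGraph, Finset.mem_union, Finset.mem_image]
  exact Or.inr ⟨u, Finset.mem_univ u, rfl⟩

end SCAux

/-- in the reduction graph (unit capacities), the maximum flow value from
`v_u` to `t` is `2·f(u) + 1`, where `f(u)` is the number of sets of `𝒮` containing `u`. -/
theorem scGraph_maxflow {U : Type} [DecidableEq U] [Fintype U]
    (𝒮 : Finset (Finset U)) (u : U) :
    maxFlow (scGraph 𝒮) (SCV.vu u) SCV.t =
      2 * (𝒮.filter fun S => u ∈ S).card + 1 := by
  classical
  have headI_mem : ∀ (p : List (SCV U × SCV U)), p ≠ [] → p.headI ∈ p := by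
    intro p hp
    cases p with
    | nil => exact absurd rfl hp
    | cons e q => exact List.mem_cons_self
  set F := 𝒮.filter fun S => u ∈ S with hF
  set f := F.card with hf
  have hFmem : ∀ S ∈ F, S ∈ 𝒮 ∧ u ∈ S := by
    intro S hS; simpa [hF] using (Finset.mem_filter.mp hS)
  -- the witnessing family of edge-disjoint walks
  set ps : List (List (SCV U × SCV U)) :=
    (F.toList.map (scP1 u)) ++ (F.toList.map (scP2 u)) ++ [[(SCV.vu u, SCV.t)]] with hps
  have hlen : ps.length = 2 * f + 1 := by
    simp [hps, hf]; ring
  have hwalks : ∀ p ∈ ps, IsWalk (scGraph 𝒮) (SCV.vu u) SCV.t p := by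
    intro p hp
    simp only [hps, List.mem_append, List.mem_map, List.mem_singleton] at hp
    rcases hp with (⟨S, hS, rfl⟩ | ⟨S, hS, rfl⟩) | rfl
    · obtain ⟨h1, h2⟩ := hFmem S (Finset.mem_toList.mp hS)
      exact scP1_isWalk h1 h2
    · obtain ⟨h1, h2⟩ := hFmem S (Finset.mem_toList.mp hS)
      exact scP2_isWalk h1 h2
    · exact scRed_isWalk
  have hpair : ps.Pairwise fun p q => ∀ e ∈ p, e ∉ q := by
    have hnd : F.toList.Nodup := Finset.nodup_toList F
    rw [hps, List.pairwise_append, List.pairwise_append]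
    refine ⟨⟨?_, ?_, ?_⟩, ?_, ?_⟩
    · rw [List.pairwise_map]
      refine hnd.imp_of_mem ?_
      intro S S' _ _ hne e he he'
      simp only [scP1, List.mem_cons, List.not_mem_nil, or_false] at he he'
      rcases he with rfl | rfl | rfl | rfl <;>
        rcases he' with h | h | h | h <;> simp_all [Prod.ext_iff]
    · rw [List.pairwise_map]
      refine hnd.imp_of_mem ?_
      intro S S' _ _ hne e he he'
      simp only [scP2, List.mem_cons, List.not_mem_nil, or_false] at he he'
      rcases he with rfl | rfl | rfl <;>
        rcases he' with h | h | h <;> simp_all [Prod.ext_iff]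
    · intro p hp q hq e he he'
      simp only [List.mem_map] at hp hq
      obtain ⟨S, hS, rfl⟩ := hp
      obtain ⟨S', hS', rfl⟩ := hq
      simp only [scP1, scP2, List.mem_cons, List.not_mem_nil, or_false] at he he'
      rcases he with rfl | rfl | rfl | rfl <;>
        rcases he' with h | h | h <;> simp_all [Prod.ext_iff]
    · simp
    · intro p hp q hq e he he'
      simp only [List.mem_singleton] at hq
      subst hq
      simp only [List.mem_singleton] at he'
      subst he'
      simp only [List.mem_append, List.mem_map] at hp
      rcases hp with ⟨S, hS, rfl⟩ | ⟨S, hS, rfl⟩ <;>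
        simp_all [scP1, scP2, Prod.ext_iff]
  have hub : ∀ n ∈ {n : ℕ | ∃ qs : List (List (SCV U × SCV U)), qs.length = n ∧
      (∀ p ∈ qs, IsWalk (scGraph 𝒮) (SCV.vu u) SCV.t p) ∧
      qs.Pairwise fun p q => ∀ e ∈ p, e ∉ q}, n ≤ 2 * f + 1 := by
    rintro n ⟨qs, rfl, hq, hqp⟩
    have hne : ∀ p ∈ qs, p ≠ [] := by
      intro p hp h
      subst h
      exact absurd (hq [] hp) (by simp [IsWalk])
    set hs : List (SCV U × SCV U) := qs.map List.headI with hhs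
    have hsnd : hs.Nodup := by
      have : qs.Pairwise fun p q => p.headI ≠ q.headI := by
        refine hqp.imp_of_mem ?_
        intro p q hp hq' h heq
        exact h p.headI (headI_mem p (hne p hp)) (heq ▸ headI_mem q (hne q hq'))
      exact List.pairwise_map.mpr this
    have hsub : ∀ e ∈ hs, e ∈ scOut 𝒮 u := by
      intro e he
      rw [hhs, List.mem_map] at he
      obtain ⟨p, hp, rfl⟩ := he
      obtain ⟨e', q, rfl⟩ := List.exists_cons_of_ne_nil (hne p hp)
      obtain ⟨hmem, h1, -⟩ := hq _ hp
      exact mem_scOut e' hmem h1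
    have h1 : qs.length = hs.length := by simp [hhs]
    have h2 : hs.length = hs.toFinset.card := (List.toFinset_card_of_nodup hsnd).symm
    have h3 : hs.toFinset ⊆ scOut 𝒮 u := fun e he =>
      hsub e (List.mem_toFinset.mp he)
    calc qs.length = hs.toFinset.card := by rw [h1, h2]
      _ ≤ (scOut 𝒮 u).card := Finset.card_le_card h3
      _ = 2 * f + 1 := by rw [card_scOut]
  have hmem : 2 * f + 1 ∈ {n : ℕ | ∃ qs : List (List (SCV U × SCV U)), qs.length = n ∧
      (∀ p ∈ qs, IsWalk (scGraph 𝒮) (SCV.vu u) SCV.t p) ∧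
      qs.Pairwise fun p q => ∀ e ∈ p, e ∉ q} := ⟨ps, hlen, hwalks, hpair⟩
  have hbdd : BddAbove {n : ℕ | ∃ qs : List (List (SCV U × SCV U)), qs.length = n ∧
      (∀ p ∈ qs, IsWalk (scGraph 𝒮) (SCV.vu u) SCV.t p) ∧
      qs.Pairwise fun p q => ∀ e ∈ p, e ∉ q} := ⟨2 * f + 1, fun n hn => hub n hn⟩
  rw [maxFlow]
  exact le_antisymm (csSup_le ⟨2 * f + 1, hmem⟩ hub) (le_csSup hbdd hmem)
end
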